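/- arXiv:1706.05837 — 11 statements merged into one kernel-verified Lean document; each statement's English description precedes it below -/
import Mathlib

section
/- For every fixed y ∈ G, the map β ↦ h_β(y; ẏ) is differentiable on (0, +∞) and its derivative at each β > 0 equals −(1/2)‖y*_β(y; ẏ) − ẏ‖²_S. -/
open scoped Classical
open scoped RealInnerProductSpace

set_option maxHeartbeats 1000000

private lemma aux_div_real (t X : ℝ) (ht : 0 < t) (h : t * X ≤ 0) : X ≤ 0 := by
  nlinarith

private lemma aux_main_real (σ β b M2 Q d err : ℝ) (hσ : 0 < σ) (hβ : 0 < β) (hb : 0 < b)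
    (hM2 : 0 ≤ M2) (hQ : 0 ≤ Q)
    (hpair : (β + b) / 2 * Q ≤ (b - β) / 2 * d)
    (hD2 : σ * d ^ 2 ≤ M2 * Q)
    (hlo : 0 ≤ err) (hhi : err ≤ (b - β) / 2 * d - β / 2 * Q) :
    |err| ≤ M2 / (2 * σ * β) * (b - β) ^ 2 := by
  set P : ℝ := (b - β) * d with hP
  have hQle : (β + b) * Q ≤ P := by rw [hP]; nlinarith
  have hPnn : 0 ≤ P := le_trans (by nlinarith) hQle
  have hhi' : err ≤ P / 2 := by rw [hP]; nlinarith
  have habs : |err| ≤ P / 2 := by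
    rw [abs_of_nonneg hlo]; exact hhi'
  have hkey : σ * β * P ≤ M2 * (b - β) ^ 2 := by
    rcases eq_or_lt_of_le hPnn with h | h
    · have : σ * β * P = 0 := by rw [← h]; ring
      rw [this]
      positivity
    · -- σ (β+b) d² ≤ M2 (β+b) Q ≤ M2 P
      have h1 : σ * (β + b) * d ^ 2 ≤ M2 * P := by
        have ha : (β + b) * (σ * d ^ 2) ≤ (β + b) * (M2 * Q) :=
          mul_le_mul_of_nonneg_left hD2 (by linarith)
        have hb' : M2 * ((β + b) * Q) ≤ M2 * P := mul_le_mul_of_nonneg_left hQle hM2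
        nlinarith
      have h2 : σ * (β + b) * P * P ≤ M2 * (b - β) ^ 2 * P := by
        have h2' := mul_le_mul_of_nonneg_right h1 (sq_nonneg (b - β))
        rw [hP] at h2' ⊢
        nlinarith [h2']
      have h3 : σ * (β + b) * P ≤ M2 * (b - β) ^ 2 := le_of_mul_le_mul_right h2 h
      nlinarith [mul_nonneg (mul_nonneg hσ.le hb.le) hPnn]
  calc |err| ≤ P / 2 := habs
    _ ≤ M2 / (2 * σ * β) * (b - β) ^ 2 := by
        rw [div_mul_eq_mul_div, le_div_iff₀ (by positivity)]
        nlinarith [hkey]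

/-- for fixed `y`, the map `β ↦ h_β(y; ẏ)` is differentiable on `(0,∞)` with
derivative `−(1/2)‖y*_β(y; ẏ) − ẏ‖²_S` at every `β > 0`. Here the proper lsc convex
function `φ : G → (−∞,+∞]` is represented by its effective domain `domφ` and its real
values `φ` on it, `y*_β(y;ẏ)` is the (hypothesized) maximizer defining the smoothing, and
`hsm β y = h_β(y; ẏ)` is the attained maximal value. -/
theorem stmt1
    {G : Type*} [NormedAddCommGroup G] [InnerProductSpace ℝ G] [CompleteSpace G]
    (S : G →L[ℝ] G)
    (hS_sym : ∀ x y : G, ⟪S x, y⟫ = ⟪x, S y⟫)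
    (σ : ℝ) (hσ : 0 < σ) (hSpos : ∀ y : G, σ * ‖y‖ ^ 2 ≤ ⟪y, S y⟫)
    (domφ : Set G) (φ : G → ℝ)
    (hdom_ne : domφ.Nonempty) (hdom_cvx : Convex ℝ domφ)
    (hφ_cvx : ConvexOn ℝ domφ φ)
    (hφ_lsc : LowerSemicontinuous fun z => if z ∈ domφ then ((φ z : EReal)) else (⊤ : EReal))
    (ydot : G) (ystar : ℝ → G → G) (hsm : ℝ → G → ℝ)
    (hmax_mem : ∀ β : ℝ, 0 < β → ∀ y : G, ystar β y ∈ domφ)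
    (hmax : ∀ β : ℝ, 0 < β → ∀ y : G, ∀ z ∈ domφ,
      ⟪y, z⟫ - φ z - β / 2 * ⟪z - ydot, S (z - ydot)⟫ ≤
        ⟪y, ystar β y⟫ - φ (ystar β y) - β / 2 * ⟪ystar β y - ydot, S (ystar β y - ydot)⟫)
    (hsm_def : ∀ β : ℝ, 0 < β → ∀ y : G,
      hsm β y = ⟪y, ystar β y⟫ - φ (ystar β y)
        - β / 2 * ⟪ystar β y - ydot, S (ystar β y - ydot)⟫)
    :
    ∀ y : G, ∀ β : ℝ, 0 < β →
      HasDerivAt (fun b => hsm b y)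
        (-(1 / 2) * ⟪ystar β y - ydot, S (ystar β y - ydot)⟫) β := by
  intro y β hβ
  -- symmetry of the inner product with S
  have hsym : ∀ u v : G, ⟪u, S v⟫ = ⟪v, S u⟫ := by
    intro u v
    rw [← hS_sym v u, real_inner_comm]
  have negg : ∀ u : G, ⟪-u, S (-u)⟫ = ⟪u, S u⟫ := by
    intro u
    rw [map_neg, inner_neg_neg]
  have hdiff : ∀ a c : G, ⟪a - c, S (a - c)⟫ = ⟪a, S a⟫ - 2 * ⟪c, S a⟫ + ⟪c, S c⟫ := by
    intro a c
    simp only [map_sub, inner_sub_left, inner_sub_right]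
    rw [hsym a c]
    ring
  have hdiff2 : ∀ a c : G, ⟪a, S a⟫ - ⟪c, S c⟫ = -⟪a + c, S (c - a)⟫ := by
    intro a c
    simp only [map_sub, inner_add_left, inner_sub_right]
    rw [hsym a c]
    ring
  -- nonnegativity of the quadratic form
  have hQnn : ∀ u : G, (0:ℝ) ≤ ⟪u, S u⟫ := by
    intro u
    have := hSpos u
    nlinarith [sq_nonneg ‖u‖]
  -- STRONG optimality of the maximizer
  have key : ∀ b : ℝ, 0 < b → ∀ z ∈ domφ,
      (⟪y, z⟫ - φ z - b/2 * ⟪z - ydot, S (z - ydot)⟫)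
          + b/2 * ⟪z - ystar b y, S (z - ystar b y)⟫ ≤
        ⟪y, ystar b y⟫ - φ (ystar b y) - b/2 * ⟪ystar b y - ydot, S (ystar b y - ydot)⟫ := by
    intro b hb z hz
    have hwmem : ystar b y ∈ domφ := hmax_mem b hb y
    have main : ∀ t ∈ Set.Ioo (0:ℝ) 1,
        (⟪y, z⟫ - φ z - b/2 * ⟪z - ydot, S (z - ydot)⟫)
            + b/2 * (1 - t) * ⟪z - ystar b y, S (z - ystar b y)⟫ ≤
          ⟪y, ystar b y⟫ - φ (ystar b y) - b/2 * ⟪ystar b y - ydot, S (ystar b y - ydot)⟫ := by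
      intro t ht
      obtain ⟨ht0, ht1⟩ := ht
      have hmem : (1 - t) • ystar b y + t • z ∈ domφ :=
        hdom_cvx hwmem hz (by linarith) ht0.le (by ring)
      have h1 := hmax b hb y _ hmem
      have hφc : φ ((1 - t) • ystar b y + t • z) ≤ (1 - t) * φ (ystar b y) + t * φ z :=
        hφ_cvx.2 hwmem hz (by linarith) ht0.le (by ring)
      have hvy : ((1 - t) • ystar b y + t • z) - ydot
          = (1 - t) • (ystar b y - ydot) + t • (z - ydot) := by
        module
      have hyv : ⟪y, (1 - t) • ystar b y + t • z⟫
          = (1 - t) * ⟪y, ystar b y⟫ + t * ⟪y, z⟫ := by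
        rw [inner_add_right, real_inner_smul_right, real_inner_smul_right]
      have hqv : ⟪((1 - t) • ystar b y + t • z) - ydot,
            S (((1 - t) • ystar b y + t • z) - ydot)⟫
          = (1-t)^2 * ⟪ystar b y - ydot, S (ystar b y - ydot)⟫
            + 2*t*(1-t) * ⟪ystar b y - ydot, S (z - ydot)⟫
            + t^2 * ⟪z - ydot, S (z - ydot)⟫ := by
        have gen : ∀ a c : G, ⟪(1 - t) • a + t • c, S ((1 - t) • a + t • c)⟫
            = (1-t)^2 * ⟪a, S a⟫ + 2*t*(1-t) * ⟪a, S c⟫ + t^2 * ⟪c, S c⟫ := by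
          intro a c
          simp only [map_add, map_smul, inner_add_left, inner_add_right,
            real_inner_smul_left, real_inner_smul_right]
          rw [hsym c a]
          ring
        rw [hvy, gen]
      have hQ : ⟪z - ystar b y, S (z - ystar b y)⟫
          = ⟪z - ydot, S (z - ydot)⟫ - 2 * ⟪ystar b y - ydot, S (z - ydot)⟫
            + ⟪ystar b y - ydot, S (ystar b y - ydot)⟫ := by
        rw [show z - ystar b y = (z - ydot) - (ystar b y - ydot) from by abel,
          hdiff (z - ydot) (ystar b y - ydot)]
      rw [hyv, hqv] at h1
      have hstep : t * ((⟪y, z⟫ - φ z - b/2 * ⟪z - ydot, S (z - ydot)⟫)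
          - (⟪y, ystar b y⟫ - φ (ystar b y)
              - b/2 * ⟪ystar b y - ydot, S (ystar b y - ydot)⟫)
          + b/2 * (1 - t) * (⟪z - ydot, S (z - ydot)⟫
              - 2 * ⟪ystar b y - ydot, S (z - ydot)⟫
              + ⟪ystar b y - ydot, S (ystar b y - ydot)⟫)) ≤ 0 := by
        nlinarith [h1, hφc]
      have hX := aux_div_real t _ ht0 hstep
      rw [hQ]
      linarith
    -- pass to the limit t → 0⁺
    have hev : ∀ᶠ t in nhdsWithin (0:ℝ) (Set.Ioi 0),
        (⟪y, z⟫ - φ z - b/2 * ⟪z - ydot, S (z - ydot)⟫)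
            + b/2 * (1 - t) * ⟪z - ystar b y, S (z - ystar b y)⟫ ≤
          ⟪y, ystar b y⟫ - φ (ystar b y)
            - b/2 * ⟪ystar b y - ydot, S (ystar b y - ydot)⟫ := by
      filter_upwards [Ioo_mem_nhdsGT_of_mem (Set.mem_Ico.2 ⟨le_refl (0:ℝ), one_pos⟩)]
        with t ht using main t ht
    have hcont : Filter.Tendsto
        (fun t : ℝ => (⟪y, z⟫ - φ z - b/2 * ⟪z - ydot, S (z - ydot)⟫)
            + b/2 * (1 - t) * ⟪z - ystar b y, S (z - ystar b y)⟫)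
        (nhdsWithin (0:ℝ) (Set.Ioi 0))
        (nhds ((⟪y, z⟫ - φ z - b/2 * ⟪z - ydot, S (z - ydot)⟫)
            + b/2 * (1 - 0) * ⟪z - ystar b y, S (z - ystar b y)⟫)) := by
      apply Filter.Tendsto.mono_left _ nhdsWithin_le_nhds
      exact tendsto_const_nhds.add
        (((tendsto_const_nhds.mul (tendsto_const_nhds.sub Filter.tendsto_id)).mul
          tendsto_const_nhds))
    have hlim := le_of_tendsto hcont hev
    simpa using hlim
  -- pairwise comparison of maximizers
  have pair : ∀ b₁ b₂ : ℝ, 0 < b₁ → 0 < b₂ →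
      (b₁ + b₂)/2 * ⟪ystar b₂ y - ystar b₁ y, S (ystar b₂ y - ystar b₁ y)⟫ ≤
        (b₂ - b₁)/2 * (⟪ystar b₁ y - ydot, S (ystar b₁ y - ydot)⟫
          - ⟪ystar b₂ y - ydot, S (ystar b₂ y - ydot)⟫) := by
    intro b₁ b₂ h1 h2
    have k1 := key b₁ h1 (ystar b₂ y) (hmax_mem b₂ h2 y)
    have k2 := key b₂ h2 (ystar b₁ y) (hmax_mem b₁ h1 y)
    rw [show ystar b₁ y - ystar b₂ y = -(ystar b₂ y - ystar b₁ y) from by abel, negg] at k2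
    linarith
  -- monotonicity: q (ystar · y) is antitone on positives
  have mono : ∀ b₁ b₂ : ℝ, 0 < b₁ → b₁ ≤ b₂ →
      ⟪ystar b₂ y - ydot, S (ystar b₂ y - ydot)⟫
        ≤ ⟪ystar b₁ y - ydot, S (ystar b₁ y - ydot)⟫ := by
    intro b₁ b₂ h1 h12
    rcases eq_or_lt_of_le h12 with h | h
    · rw [h]
    · have hp := pair b₁ b₂ h1 (lt_trans h1 h)
      have hQ' := hQnn (ystar b₂ y - ystar b₁ y)
      have h5 : 0 ≤ (b₂ - b₁)/2 * (⟪ystar b₁ y - ydot, S (ystar b₁ y - ydot)⟫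
          - ⟪ystar b₂ y - ydot, S (ystar b₂ y - ydot)⟫) :=
        le_trans (mul_nonneg (by linarith) hQ') hp
      nlinarith [h5]
  -- constants
  set C₀ : ℝ := ⟪ystar (β/2) y - ydot, S (ystar (β/2) y - ydot)⟫ with hC₀
  have hC₀nn : 0 ≤ C₀ := hQnn _
  set A : ℝ := 2 * ‖ystar β y - ydot‖^2 + 2 * (C₀ / σ) with hA
  have hAnn : 0 ≤ A := by rw [hA]; positivity
  set M2 : ℝ := ‖S‖^2 * A with hM2
  have hM2nn : 0 ≤ M2 := by rw [hM2]; positivity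
  -- the error is O((b-β)^2) near β
  have bigO : ∀ b : ℝ, β/2 < b →
      |hsm b y - hsm β y
          - (b - β) * (-(1/2) * ⟪ystar β y - ydot, S (ystar β y - ydot)⟫)|
        ≤ M2 / (2 * σ * β) * (b - β)^2 := by
    intro b hb
    have hbpos : 0 < b := lt_trans (by linarith) hb
    have e1 := key β hβ (ystar b y) (hmax_mem b hbpos y)
    have e2 := key b hbpos (ystar β y) (hmax_mem β hβ y)
    rw [show ystar β y - ystar b y = -(ystar b y - ystar β y) from by abel, negg] at e2
    have hs1 := hsm_def β hβ y
    have hs2 := hsm_def b hbpos y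
    have hp := pair β b hβ hbpos
    -- quadratic gap and its properties
    have hQnn' : (0:ℝ) ≤ ⟪ystar b y - ystar β y, S (ystar b y - ystar β y)⟫ := hQnn _
    -- bound d² by Q
    have hDrep : ⟪ystar β y - ydot, S (ystar β y - ydot)⟫
          - ⟪ystar b y - ydot, S (ystar b y - ydot)⟫
        = -⟪(ystar β y - ydot) + (ystar b y - ydot), S (ystar b y - ystar β y)⟫ := by
      rw [hdiff2 (ystar β y - ydot) (ystar b y - ydot),
        show (ystar b y - ydot) - (ystar β y - ydot) = ystar b y - ystar β y from by abel]
    have hDle : |⟪ystar β y - ydot, S (ystar β y - ydot)⟫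
          - ⟪ystar b y - ydot, S (ystar b y - ydot)⟫|
        ≤ ‖(ystar β y - ydot) + (ystar b y - ydot)‖
        * (‖S‖ * ‖ystar b y - ystar β y‖) := by
      rw [hDrep, abs_neg]
      calc |⟪(ystar β y - ydot) + (ystar b y - ydot), S (ystar b y - ystar β y)⟫|
          ≤ ‖(ystar β y - ydot) + (ystar b y - ydot)‖ * ‖S (ystar b y - ystar β y)‖ :=
            abs_real_inner_le_norm _ _
        _ ≤ ‖(ystar β y - ydot) + (ystar b y - ydot)‖
            * (‖S‖ * ‖ystar b y - ystar β y‖) := by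
            gcongr
            exact S.le_opNorm _
    have hzz : σ * ‖ystar b y - ystar β y‖^2
        ≤ ⟪ystar b y - ystar β y, S (ystar b y - ystar β y)⟫ := hSpos _
    have hz2bound : σ * ‖ystar b y - ydot‖^2 ≤ C₀ :=
      le_trans (hSpos _) (mono (β/2) b (by linarith) (by linarith))
    have h3 : ‖ystar b y - ydot‖^2 ≤ C₀ / σ := by
      rw [le_div_iff₀ hσ]
      nlinarith [hz2bound]
    have hsumsq : ‖(ystar β y - ydot) + (ystar b y - ydot)‖^2 ≤ A := by
      have h4 : ‖(ystar β y - ydot) + (ystar b y - ydot)‖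
          ≤ ‖ystar β y - ydot‖ + ‖ystar b y - ydot‖ := norm_add_le _ _
      have h5 : ‖(ystar β y - ydot) + (ystar b y - ydot)‖^2
          ≤ (‖ystar β y - ydot‖ + ‖ystar b y - ydot‖)^2 :=
        pow_le_pow_left₀ (norm_nonneg _) h4 2
      rw [hA]
      linarith [h5, h3, sq_nonneg (‖ystar β y - ydot‖ - ‖ystar b y - ydot‖)]
    have hD2 : σ * (⟪ystar β y - ydot, S (ystar β y - ydot)⟫
          - ⟪ystar b y - ydot, S (ystar b y - ydot)⟫)^2
        ≤ M2 * ⟪ystar b y - ystar β y, S (ystar b y - ystar β y)⟫ := by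
      have h1 : (⟪ystar β y - ydot, S (ystar β y - ydot)⟫
            - ⟪ystar b y - ydot, S (ystar b y - ydot)⟫)^2
          ≤ (‖(ystar β y - ydot) + (ystar b y - ydot)‖
          * (‖S‖ * ‖ystar b y - ystar β y‖))^2 := by
        rw [← sq_abs]
        exact pow_le_pow_left₀ (abs_nonneg _) hDle 2
      calc σ * (⟪ystar β y - ydot, S (ystar β y - ydot)⟫
            - ⟪ystar b y - ydot, S (ystar b y - ydot)⟫)^2
          ≤ σ * (‖(ystar β y - ydot) + (ystar b y - ydot)‖
            * (‖S‖ * ‖ystar b y - ystar β y‖))^2 := mul_le_mul_of_nonneg_left h1 hσ.le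
        _ = ‖S‖^2 * ‖(ystar β y - ydot) + (ystar b y - ydot)‖^2
            * (σ * ‖ystar b y - ystar β y‖^2) := by ring
        _ ≤ ‖S‖^2 * ‖(ystar β y - ydot) + (ystar b y - ydot)‖^2
            * ⟪ystar b y - ystar β y, S (ystar b y - ystar β y)⟫ :=
            mul_le_mul_of_nonneg_left hzz (by positivity)
        _ ≤ ‖S‖^2 * A * ⟪ystar b y - ystar β y, S (ystar b y - ystar β y)⟫ :=
            mul_le_mul_of_nonneg_right
              (mul_le_mul_of_nonneg_left hsumsq (sq_nonneg _)) hQnn'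
        _ = M2 * ⟪ystar b y - ystar β y, S (ystar b y - ystar β y)⟫ := by rw [hM2]
    -- the two-sided error bound
    have herr_lo : 0 ≤ hsm b y - hsm β y
        - (b - β) * (-(1/2) * ⟪ystar β y - ydot, S (ystar β y - ydot)⟫) := by
      linarith only [e2, hs1, hs2, mul_nonneg hbpos.le hQnn']
    have herr_hi : hsm b y - hsm β y
        - (b - β) * (-(1/2) * ⟪ystar β y - ydot, S (ystar β y - ydot)⟫)
        ≤ (b - β)/2 * (⟪ystar β y - ydot, S (ystar β y - ydot)⟫
            - ⟪ystar b y - ydot, S (ystar b y - ydot)⟫)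
          - β/2 * ⟪ystar b y - ystar β y, S (ystar b y - ystar β y)⟫ := by
      linarith only [e1, hs1, hs2]
    exact aux_main_real σ β b M2 _ _ _ hσ hβ hbpos hM2nn hQnn' hp hD2 herr_lo herr_hi
  -- now conclude HasDerivAt via little-o
  rw [hasDerivAt_iff_isLittleO]
  have hO : (fun b => hsm b y - hsm β y
        - (b - β) • (-(1 / 2) * ⟪ystar β y - ydot, S (ystar β y - ydot)⟫))
      =O[nhds β] (fun b => (b - β)^2) := by
    rw [Asymptotics.isBigO_iff]
    refine ⟨M2 / (2 * σ * β), ?_⟩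
    filter_upwards [Ioi_mem_nhds (show β/2 < β by linarith)] with b hb
    have hB := bigO b hb
    simp only [smul_eq_mul, Real.norm_eq_abs]
    calc |hsm b y - hsm β y
          - (b - β) * (-(1 / 2) * ⟪ystar β y - ydot, S (ystar β y - ydot)⟫)|
        ≤ M2 / (2 * σ * β) * (b - β)^2 := hB
      _ ≤ M2 / (2 * σ * β) * |(b - β)^2| := by
          rw [abs_of_nonneg (sq_nonneg _)]
  have ho : (fun b : ℝ => (b - β)^2) =o[nhds β] (fun b => b - β) := by
    have h1 : (fun b : ℝ => (b - β)) =o[nhds β] (fun _ => (1:ℝ)) := by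
      rw [Asymptotics.isLittleO_one_iff]
      have : Filter.Tendsto (fun b : ℝ => b - β) (nhds β) (nhds (β - β)) :=
        (continuous_id.sub continuous_const).tendsto β
      simpa using this
    have := h1.mul_isBigO (Asymptotics.isBigO_refl (fun b : ℝ => b - β) (nhds β))
    simpa [sq] using this
  exact hO.trans_isLittleO ho
end

section
/- For every fixed y ∈ G, the map β ↦ h_β(y; ẏ) is convex on (0, +∞), and for all 0 < β̄ ≤ β̃ one has h_{β̄}(y; ẏ) ≤ h_{β̃}(y; ẏ) + ((β̃ − β̄)/2)‖y*_{β̄}(y; ẏ) − ẏ‖²_S. -/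
open scoped Classical
open scoped RealInnerProductSpace

/-! A value function that is attained, `β ↦ max_z F β z`, is convex as soon as each `β ↦ F β z`
is: at a convex combination of parameters evaluate everything at its maximizer. Here `F β z` is
affine in `β` with slope `-½‖z - ẏ‖²_S`, which gives the convexity, and comparing `F β̄` with `F β̃`
at the maximizer for `β̄` gives the inequality. -/

open Set

section ValueFunction

variable {𝕜 E ι β : Type*} [Semiring 𝕜] [PartialOrder 𝕜] [AddCommMonoid E] [AddCommMonoid β]
  [PartialOrder β] [IsOrderedAddMonoid β] [SMul 𝕜 E] [Module 𝕜 β] [PosSMulMono 𝕜 β]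

theorem convexOn_of_isMaxOn {s : Set E} {D : Set ι} {F : E → ι → β} {z : E → ι}
    (hs : Convex 𝕜 s) (hF : ∀ w ∈ D, ConvexOn 𝕜 s (F · w)) (hzD : ∀ x ∈ s, z x ∈ D)
    (hz : ∀ x ∈ s, IsMaxOn (F x) D (z x)) : ConvexOn 𝕜 s fun x => F x (z x) := by
  refine ⟨hs, fun x hx y hy a b ha hb hab => ?_⟩
  have hw : z (a • x + b • y) ∈ D := hzD _ (hs hx hy ha hb hab)
  calc F (a • x + b • y) (z (a • x + b • y))
      ≤ a • F x (z (a • x + b • y)) + b • F y (z (a • x + b • y)) :=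
        (hF _ hw).2 hx hy ha hb hab
    _ ≤ a • F x (z x) + b • F y (z y) := by
        gcongr
        exacts [isMaxOn_iff.1 (hz x hx) _ hw, isMaxOn_iff.1 (hz y hy) _ hw]

end ValueFunction

section SmoothingObjective

variable {G : Type*} [NormedAddCommGroup G] [InnerProductSpace ℝ G]
  (S : G →L[ℝ] G) (φ : G → ℝ) (ydot y : G)

/-- The function maximized in `h_β(y; ẏ)`, as a function of `β` and `ȳ`. -/
noncomputable def smoothingObjective (β : ℝ) (z : G) : ℝ :=
  ⟪y, z⟫ - φ z - β / 2 * ⟪z - ydot, S (z - ydot)⟫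

theorem smoothingObjective_eq_add (β β' : ℝ) (z : G) :
    smoothingObjective S φ ydot y β z =
      smoothingObjective S φ ydot y β' z + (β' - β) / 2 * ⟪z - ydot, S (z - ydot)⟫ := by
  unfold smoothingObjective
  ring

theorem convexOn_smoothingObjective (z : G) :
    ConvexOn ℝ univ fun β => smoothingObjective S φ ydot y β z := by
  refine ⟨convex_univ, fun β₁ _ β₂ _ a b _ _ hab => le_of_eq ?_⟩
  simp only [smoothingObjective, smul_eq_mul]
  linear_combination (φ z - ⟪y, z⟫) * hab

end SmoothingObjective

theorem stmt2_general
    {G : Type*} [NormedAddCommGroup G] [InnerProductSpace ℝ G]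
    (S : G →L[ℝ] G)
    (domφ : Set G) (φ : G → ℝ)
    (ydot : G) (ystar : ℝ → G → G) (hsm : ℝ → G → ℝ)
    (hmax_mem : ∀ β : ℝ, 0 < β → ∀ y : G, ystar β y ∈ domφ)
    (hmax : ∀ β : ℝ, 0 < β → ∀ y : G, ∀ z ∈ domφ,
      ⟪y, z⟫ - φ z - β / 2 * ⟪z - ydot, S (z - ydot)⟫ ≤
        ⟪y, ystar β y⟫ - φ (ystar β y) - β / 2 * ⟪ystar β y - ydot, S (ystar β y - ydot)⟫)
    (hsm_def : ∀ β : ℝ, 0 < β → ∀ y : G,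
      hsm β y = ⟪y, ystar β y⟫ - φ (ystar β y)
        - β / 2 * ⟪ystar β y - ydot, S (ystar β y - ydot)⟫)
    :
    ∀ y : G,
      ConvexOn ℝ (Set.Ioi (0 : ℝ)) (fun b => hsm b y) ∧
      ∀ βb βt : ℝ, 0 < βb → βb ≤ βt →
        hsm βb y ≤ hsm βt y
          + (βt - βb) / 2 * ⟪ystar βb y - ydot, S (ystar βb y - ydot)⟫ := by
  intro y
  set F := smoothingObjective S φ ydot y
  have hmaxOn : ∀ β, 0 < β → IsMaxOn (F β) domφ (ystar β y) :=
    fun β hβ => isMaxOn_iff.2 (hmax β hβ y)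
  have hsm_eq : ∀ β, 0 < β → hsm β y = F β (ystar β y) := fun β hβ => hsm_def β hβ y
  refine ⟨?_, fun βb βt hβb hle => ?_⟩
  · refine (convexOn_of_isMaxOn (convex_Ioi 0) (fun z _ => ?_) (fun β hβ => hmax_mem β hβ y)
      hmaxOn).congr fun β hβ => (hsm_eq β hβ).symm
    exact (convexOn_smoothingObjective S φ ydot y z).subset (subset_univ _) (convex_Ioi 0)
  · have hβt : 0 < βt := hβb.trans_le hle
    calc hsm βb y
        = F βt (ystar βb y) + (βt - βb) / 2 * ⟪ystar βb y - ydot, S (ystar βb y - ydot)⟫ := by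
          rw [hsm_eq βb hβb]
          exact smoothingObjective_eq_add S φ ydot y βb βt _
      _ ≤ hsm βt y + (βt - βb) / 2 * ⟪ystar βb y - ydot, S (ystar βb y - ydot)⟫ := by
          rw [hsm_eq βt hβt]
          gcongr
          exact isMaxOn_iff.1 (hmaxOn βt hβt) _ (hmax_mem βb hβb y)

/-- for fixed `y`, `β ↦ h_β(y; ẏ)` is convex on `(0,∞)` and for
`0 < β̄ ≤ β̃` one has `h_β̄(y;ẏ) ≤ h_β̃(y;ẏ) + ((β̃−β̄)/2)‖y*_β̄(y;ẏ) − ẏ‖²_S`. -/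
theorem stmt2
    {G : Type*} [NormedAddCommGroup G] [InnerProductSpace ℝ G] [CompleteSpace G]
    (S : G →L[ℝ] G)
    (hS_sym : ∀ x y : G, ⟪S x, y⟫ = ⟪x, S y⟫)
    (σ : ℝ) (hσ : 0 < σ) (hSpos : ∀ y : G, σ * ‖y‖ ^ 2 ≤ ⟪y, S y⟫)
    (domφ : Set G) (φ : G → ℝ)
    (hdom_ne : domφ.Nonempty) (hdom_cvx : Convex ℝ domφ)
    (hφ_cvx : ConvexOn ℝ domφ φ)
    (hφ_lsc : LowerSemicontinuous fun z => if z ∈ domφ then ((φ z : EReal)) else (⊤ : EReal))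
    (ydot : G) (ystar : ℝ → G → G) (hsm : ℝ → G → ℝ)
    (hmax_mem : ∀ β : ℝ, 0 < β → ∀ y : G, ystar β y ∈ domφ)
    (hmax : ∀ β : ℝ, 0 < β → ∀ y : G, ∀ z ∈ domφ,
      ⟪y, z⟫ - φ z - β / 2 * ⟪z - ydot, S (z - ydot)⟫ ≤
        ⟪y, ystar β y⟫ - φ (ystar β y) - β / 2 * ⟪ystar β y - ydot, S (ystar β y - ydot)⟫)
    (hsm_def : ∀ β : ℝ, 0 < β → ∀ y : G,
      hsm β y = ⟪y, ystar β y⟫ - φ (ystar β y)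
        - β / 2 * ⟪ystar β y - ydot, S (ystar β y - ydot)⟫)
    :
    ∀ y : G,
      ConvexOn ℝ (Set.Ioi (0 : ℝ)) (fun b => hsm b y) ∧
      ∀ βb βt : ℝ, 0 < βb → βb ≤ βt →
        hsm βb y ≤ hsm βt y
          + (βt - βb) / 2 * ⟪ystar βb y - ydot, S (ystar βb y - ydot)⟫ :=
  stmt2_general S domφ φ ydot ystar hsm hmax_mem hmax hsm_def
end

section
/- For every β > 0 and all ȳ, ŷ ∈ G, the smoothed function satisfies the cocoercivity-type inequality h_β(ŷ; ẏ) + ⟨ȳ − ŷ, y*_β(ŷ; ẏ)⟩ ≤ h_β(ȳ; ẏ) − (β/2)‖y*_β(ŷ; ẏ) − y*_β(ȳ; ẏ)‖²_S (here y*_β(·; ẏ) = ∇h_β(·; ẏ)). -/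
open scoped Classical
open scoped RealInnerProductSpace

lemma q_combo_aux {G : Type*} [NormedAddCommGroup G] [InnerProductSpace ℝ G]
    (S : G →L[ℝ] G) (hS : ∀ x y : G, ⟪S x, y⟫ = ⟪x, S y⟫)
    (t : ℝ) (a b : G) :
    ⟪(1-t)•a + t•b, S ((1-t)•a + t•b)⟫ =
      (1-t)*⟪a, S a⟫ + t*⟪b, S b⟫ - t*(1-t)*⟪a-b, S (a-b)⟫ := by
  have hba : ⟪b, S a⟫ = ⟪a, S b⟫ := by rw [← hS]; exact real_inner_comm _ _
  simp only [map_add, map_smul, map_sub, inner_add_left, inner_add_right,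
    inner_sub_left, inner_sub_right, real_inner_smul_left, real_inner_smul_right, hba]
  ring

/-- cocoercivity-type inequality for the smoothed function:
`h_β(ŷ;ẏ) + ⟨ȳ − ŷ, y*_β(ŷ;ẏ)⟩ ≤ h_β(ȳ;ẏ) − (β/2)‖y*_β(ŷ;ẏ) − y*_β(ȳ;ẏ)‖²_S`. -/
theorem stmt3
    {G : Type*} [NormedAddCommGroup G] [InnerProductSpace ℝ G] [CompleteSpace G]
    (S : G →L[ℝ] G)
    (hS_sym : ∀ x y : G, ⟪S x, y⟫ = ⟪x, S y⟫)
    (σ : ℝ) (hσ : 0 < σ) (hSpos : ∀ y : G, σ * ‖y‖ ^ 2 ≤ ⟪y, S y⟫)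
    (domφ : Set G) (φ : G → ℝ)
    (hdom_ne : domφ.Nonempty) (hdom_cvx : Convex ℝ domφ)
    (hφ_cvx : ConvexOn ℝ domφ φ)
    (hφ_lsc : LowerSemicontinuous fun z => if z ∈ domφ then ((φ z : EReal)) else (⊤ : EReal))
    (ydot : G) (ystar : ℝ → G → G) (hsm : ℝ → G → ℝ)
    (hmax_mem : ∀ β : ℝ, 0 < β → ∀ y : G, ystar β y ∈ domφ)
    (hmax : ∀ β : ℝ, 0 < β → ∀ y : G, ∀ z ∈ domφ,
      ⟪y, z⟫ - φ z - β / 2 * ⟪z - ydot, S (z - ydot)⟫ ≤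
        ⟪y, ystar β y⟫ - φ (ystar β y) - β / 2 * ⟪ystar β y - ydot, S (ystar β y - ydot)⟫)
    (hsm_def : ∀ β : ℝ, 0 < β → ∀ y : G,
      hsm β y = ⟪y, ystar β y⟫ - φ (ystar β y)
        - β / 2 * ⟪ystar β y - ydot, S (ystar β y - ydot)⟫)
    :
    ∀ β : ℝ, 0 < β → ∀ ybar yhat : G,
      hsm β yhat + ⟪ybar - yhat, ystar β yhat⟫ ≤
        hsm β ybar - β / 2 *
          ⟪ystar β yhat - ystar β ybar, S (ystar β yhat - ystar β ybar)⟫ := by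
  intro β hβ ybar yhat
  set u := ystar β yhat with hu
  set v := ystar β ybar with hv
  have hu_mem := hmax_mem β hβ yhat
  have hv_mem := hmax_mem β hβ ybar
  have hq_nonneg : ∀ w : G, (0:ℝ) ≤ ⟪w, S w⟫ := fun w =>
    le_trans (by positivity) (hSpos w)
  set C : ℝ := β / 2 * ⟪u - v, S (u - v)⟫ with hC
  have hC_nonneg : 0 ≤ C := by
    have := hq_nonneg (u - v)
    positivity
  -- strong maximality at v for parameter ybar
  have hforall : ∀ t : ℝ, 0 < t → t ≤ 1 →
      (⟪ybar, u⟫ - φ u - β / 2 * ⟪u - ydot, S (u - ydot)⟫)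
        - (⟪ybar, v⟫ - φ v - β / 2 * ⟪v - ydot, S (v - ydot)⟫) + C ≤ t * C := by
    intro t ht ht1
    set z : G := (1 - t) • v + t • u with hz
    have hz_mem : z ∈ domφ :=
      hdom_cvx hv_mem hu_mem (by linarith) (le_of_lt ht) (by ring)
    have hφz : φ z ≤ (1 - t) * φ v + t * φ u :=
      hφ_cvx.2 hv_mem hu_mem (by linarith) (le_of_lt ht) (by ring)
    have hinz : ⟪ybar, z⟫ = (1 - t) * ⟪ybar, v⟫ + t * ⟪ybar, u⟫ := by
      simp [hz, inner_add_right, real_inner_smul_right]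
    have hzy : z - ydot = (1 - t) • (v - ydot) + t • (u - ydot) := by
      rw [hz]; module
    have hquad : ⟪z - ydot, S (z - ydot)⟫ =
        (1 - t) * ⟪v - ydot, S (v - ydot)⟫ + t * ⟪u - ydot, S (u - ydot)⟫
          - t * (1 - t) * ⟪v - u, S (v - u)⟫ := by
      rw [hzy, q_combo_aux S hS_sym]
      congr 3 <;> abel_nf
    have hvu : ⟪v - u, S (v - u)⟫ = ⟪u - v, S (u - v)⟫ := by
      have h : v - u = -(u - v) := by abel
      rw [h, map_neg, inner_neg_neg]
    have hle := hmax β hβ ybar z hz_mem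
    rw [← hv] at hle
    rw [hinz, hquad, hvu] at hle
    have hkey : t * ((⟪ybar, u⟫ - φ u - β / 2 * ⟪u - ydot, S (u - ydot)⟫)
        - (⟪ybar, v⟫ - φ v - β / 2 * ⟪v - ydot, S (v - ydot)⟫) + (1 - t) * C) ≤ 0 := by
      rw [hC]; nlinarith [hφz, hle]
    nlinarith [hkey, ht]
  have hA : (⟪ybar, u⟫ - φ u - β / 2 * ⟪u - ydot, S (u - ydot)⟫)
      - (⟪ybar, v⟫ - φ v - β / 2 * ⟪v - ydot, S (v - ydot)⟫) + C ≤ 0 := by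
    by_contra hcon
    push_neg at hcon
    set A := (⟪ybar, u⟫ - φ u - β / 2 * ⟪u - ydot, S (u - ydot)⟫)
      - (⟪ybar, v⟫ - φ v - β / 2 * ⟪v - ydot, S (v - ydot)⟫) + C with hAdef
    clear_value A
    rcases eq_or_lt_of_le hC_nonneg with hC0 | hCpos
    · have := hforall 1 one_pos le_rfl
      rw [← hC0] at this; linarith
    · have hCne : C ≠ 0 := ne_of_gt hCpos
      have ht1 : (0:ℝ) < min 1 (A / (2 * C)) := by
        apply lt_min one_pos
        positivity
      have h1 := hforall _ ht1 (min_le_left _ _)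
      have h2 : min 1 (A / (2 * C)) * C ≤ A / (2 * C) * C :=
        mul_le_mul_of_nonneg_right (min_le_right _ _) hC_nonneg
      have h3 : A / (2 * C) * C = A / 2 := by field_simp
      rw [h3] at h2
      have h4 : A ≤ A / 2 := le_trans h1 h2
      linarith
  rw [hsm_def β hβ ybar, hsm_def β hβ yhat, ← hu, ← hv]
  have hsplit : ⟪ybar - yhat, u⟫ = ⟪ybar, u⟫ - ⟪yhat, u⟫ := inner_sub_left _ _ _
  rw [hC] at hA
  linarith [hA, hsplit.ge, hsplit.le]
end

section
/- Let α ∈ [0, 1] and τ > 0, and consider the cubic P(t) = α t³ + t² + τ² t − τ². Then P has exactly one root t₊ in (0, +∞); moreover t₊ ∈ (0, 1) and t₊ ≤ (−τ² + √(τ⁴ + 4τ²))/2 (the positive root of Q(t) = t² + τ² t − τ²). -/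
/-- the cubic `P(t) = α t³ + t² + τ² t − τ²` with `α ∈ [0,1]`, `τ > 0`
has exactly one positive root; this root lies in `(0,1)` and is bounded above by the
positive root of `Q(t) = t² + τ² t − τ²`. -/
theorem stmt5 (α τ : ℝ) (hα : α ∈ Set.Icc (0 : ℝ) 1) (hτ : 0 < τ) :
    (∃! t : ℝ, 0 < t ∧ α * t ^ 3 + t ^ 2 + τ ^ 2 * t - τ ^ 2 = 0) ∧
    (∀ t : ℝ, 0 < t → α * t ^ 3 + t ^ 2 + τ ^ 2 * t - τ ^ 2 = 0 →
      t < 1 ∧ t ≤ (-τ ^ 2 + Real.sqrt (τ ^ 4 + 4 * τ ^ 2)) / 2) := by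
  obtain ⟨hα0, hα1⟩ := hα
  have hτ2 : 0 < τ ^ 2 := by positivity
  -- existence of a root in (0,1)
  have hc : ContinuousOn (fun t : ℝ => α * t ^ 3 + t ^ 2 + τ ^ 2 * t - τ ^ 2)
      (Set.Icc (0:ℝ) 1) := by
    apply Continuous.continuousOn
    continuity
  have h0mem : (0:ℝ) ∈ Set.Ioo ((fun t : ℝ => α * t ^ 3 + t ^ 2 + τ ^ 2 * t - τ ^ 2) 0)
      ((fun t : ℝ => α * t ^ 3 + t ^ 2 + τ ^ 2 * t - τ ^ 2) 1) := by
    simp only [Set.mem_Ioo]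
    constructor <;> nlinarith
  obtain ⟨t₀, ht₀, he₀⟩ := intermediate_value_Ioo (by norm_num : (0:ℝ) ≤ 1) hc h0mem
  constructor
  · refine ⟨t₀, ⟨ht₀.1, he₀⟩, ?_⟩
    rintro y ⟨hy, hey⟩
    have hfac : (y - t₀) * (α * (y ^ 2 + y * t₀ + t₀ ^ 2) + (y + t₀) + τ ^ 2) = 0 := by
      linear_combination hey - he₀
    have hpos : 0 < α * (y ^ 2 + y * t₀ + t₀ ^ 2) + (y + t₀) + τ ^ 2 := by
      have : 0 ≤ α * (y ^ 2 + y * t₀ + t₀ ^ 2) :=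
        mul_nonneg hα0 (by nlinarith [sq_nonneg (y - t₀), sq_nonneg (y + t₀)])
      nlinarith [mul_pos hy ht₀.1]
    have := mul_eq_zero.mp hfac
    rcases this with h | h
    · linarith
    · linarith
  · intro t ht he
    have hat : 0 ≤ α * t ^ 3 := mul_nonneg hα0 (by positivity)
    have h1 : t < 1 := by nlinarith
    have hs : Real.sqrt (τ ^ 4 + 4 * τ ^ 2) ^ 2 = τ ^ 4 + 4 * τ ^ 2 :=
      Real.sq_sqrt (by positivity)
    have hs0 : 0 ≤ Real.sqrt (τ ^ 4 + 4 * τ ^ 2) := Real.sqrt_nonneg _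
    have hQ : t ^ 2 + τ ^ 2 * t - τ ^ 2 ≤ 0 := by nlinarith [hat]
    refine ⟨h1, ?_⟩
    nlinarith [sq_nonneg (Real.sqrt (τ ^ 4 + 4 * τ ^ 2) - (2 * t + τ ^ 2)),
      sq_nonneg (Real.sqrt (τ ^ 4 + 4 * τ ^ 2) + (2 * t + τ ^ 2))]
end

section
/- For the parameter sequences of the linearized ASGARD algorithm, one has for every integer k ≥ 1 the telescoping identity (1 − τ_k)/(τ_k² B_{k+1}) = 1/(τ_{k−1}² B_k). -/
/-- telescoping identity `(1 − τ_k)/(τ_k² B_{k+1}) = 1/(τ_{k−1}² B_k)` (k ≥ 1)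
for the parameter sequences of linearized ASGARD. -/
theorem stmt6 (L m β0 : ℝ) (hL : 0 ≤ L) (hm : 0 < m) (hβ0pos : 0 < β0)
    (τ β B : ℕ → ℝ)
    (hτpos : ∀ k, 0 < τ k) (hτ0 : τ 0 = 1)
    (hβinit : β 0 = β0)
    (hβrec : ∀ k, β (k + 1) = β k / (1 + τ k))
    (hBrec : ∀ k, B (k + 1) = L + m / β (k + 1))
    (hcubic : ∀ k, (B (k + 1) - L) / B (k + 1) * τ (k + 1) ^ 3 + τ (k + 1) ^ 2
        + τ k ^ 2 * τ (k + 1) - τ k ^ 2 = 0) :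
    ∀ k : ℕ, (1 - τ (k + 1)) / (τ (k + 1) ^ 2 * B (k + 2)) = 1 / (τ k ^ 2 * B (k + 1)) := by
  have hβpos : ∀ n, 0 < β n := by
    intro n
    induction n with
    | zero => rw [hβinit]; exact hβ0pos
    | succ n ih =>
      rw [hβrec]
      exact div_pos ih (by nlinarith [hτpos n])
  have hBpos : ∀ n, 0 < B (n + 1) := by
    intro n
    rw [hBrec]
    have := hβpos (n + 1)
    positivity
  intro k
  have hBne : B (k + 1) ≠ 0 := (hBpos k).ne'
  have hβne : β (k + 1) ≠ 0 := (hβpos (k + 1)).ne'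
  have hτne : (1 : ℝ) + τ (k + 1) ≠ 0 := by nlinarith [hτpos (k + 1)]
  -- B(k+2) = L + (1 + τ(k+1)) * (B(k+1) - L)
  have hBL : B (k + 2) = L + (1 + τ (k + 1)) * (B (k + 1) - L) := by
    rw [hBrec (k + 1), hBrec k, hβrec (k + 1)]
    field_simp
    ring
  -- cubic cleared of denominators
  have c' : (B (k + 1) - L) * τ (k + 1) ^ 3 + B (k + 1) * τ (k + 1) ^ 2
      + B (k + 1) * τ k ^ 2 * τ (k + 1) - B (k + 1) * τ k ^ 2 = 0 := by
    have h := hcubic k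
    field_simp at h
    linarith
  have hx : τ (k + 1) ^ 2 * B (k + 2) ≠ 0 := by
    have h1 := hτpos (k + 1)
    have h2 : 0 < B (k + 2) := hBpos (k + 1)
    positivity
  have hy : τ k ^ 2 * B (k + 1) ≠ 0 := by
    have h1 := hτpos k
    have h2 := hBpos k
    positivity
  rw [div_eq_div_iff hx hy]
  linear_combination -c' - τ (k + 1) ^ 2 * hBL
end

section
/- For the parameter sequences of the linearized ASGARD algorithm, for every integer k ≥ 0 one has 1/(k+1) ≤ τ_k ≤ 2/(k+2), β_k ≤ β_0/(k+1), and τ_k² B_{k+1} ≤ B_1/(k+1). -/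
/-! Writing `c_k = (B_{k+1} - L) / B_{k+1} ∈ [0, 1]`, the cubic says
`τ_k² (1 - τ_{k+1}) = τ_{k+1}² + c_k τ_{k+1}³`, which is squeezed between `τ_{k+1}²` and
`τ_{k+1}² (1 + τ_{k+1})`; the two bounds on `τ` propagate through these inequalities by induction.
Since `β_{k+2} = β_{k+1} / (1 + τ_{k+1})`, one has `B_{k+2} = B_{k+1} + (B_{k+1} - L) τ_{k+1}`, and
the cubic turns this into `τ_{k+1}² B_{k+2} = τ_k² B_{k+1} (1 - τ_{k+1})`; the lower bound on
`τ_{k+1}` then makes the factor `1 - τ_{k+1}` at most `(k+1)/(k+2)`. -/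

lemma sq_le_sq_mul_one_sub_and_le_of_cubic {c a t : ℝ} (hc : c ∈ Set.Icc (0 : ℝ) 1) (ht : 0 ≤ t)
    (h : c * t ^ 3 + t ^ 2 + a ^ 2 * t - a ^ 2 = 0) :
    t ^ 2 ≤ a ^ 2 * (1 - t) ∧ a ^ 2 * (1 - t) ≤ t ^ 2 * (1 + t) := by
  have hct : 0 ≤ c * t ^ 3 := mul_nonneg hc.1 (by positivity)
  have hct' : c * t ^ 3 ≤ t ^ 3 := mul_le_of_le_one_left (by positivity) hc.2
  constructor <;> nlinarith

-- `t ↦ t² / (1 - t)` is increasing on `(0, 1)` and equals `4 / (d² - 1) > (2 / d)²` at `2 / (d + 1)`.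
lemma le_two_div_add_one_of_sq_le {a t d : ℝ} (hd : 0 < d) (ht : 0 < t) (ha : 0 ≤ a)
    (had : a ≤ 2 / d) (h : t ^ 2 ≤ a ^ 2 * (1 - t)) : t ≤ 2 / (d + 1) := by
  rw [le_div_iff₀ (by positivity)] at had ⊢
  by_contra! hcon
  nlinarith [sq_nonneg (a * d), mul_pos ht ht, mul_nonneg ha ht.le, sq_nonneg (t * (d + 1) - a * d),
    mul_nonneg (mul_nonneg ha ha) ht.le, sq_nonneg (a - t)]

-- `t ↦ t² (1 + t) / (1 - t)` is increasing on `(0, 1)` and equals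
-- `(d + 2) / (d (d + 1)²) < (1 / d)²` at `1 / (d + 1)`.
lemma one_div_add_one_le_of_le_sq_mul_one_add {a t d : ℝ} (hd : 0 < d) (ht : 0 < t)
    (had : 1 / d ≤ a) (h : a ^ 2 * (1 - t) ≤ t ^ 2 * (1 + t)) : 1 / (d + 1) ≤ t := by
  have ha : 0 < a := lt_of_lt_of_le (by positivity) had
  rw [div_le_iff₀ (by positivity)] at had ⊢
  by_contra! hcon
  nlinarith [mul_pos ht ht, mul_pos (mul_pos ht ht) ht, sq_nonneg (t * (d + 1) - 1),
    mul_pos ha ht, sq_nonneg (a * d - 1), mul_pos (mul_pos ha ha) ht]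

lemma div_one_add_le_div_add_one {b a d C : ℝ} (hd : 0 < d) (hb : 0 ≤ b) (hbC : b ≤ C / d)
    (had : 1 / d ≤ a) : b / (1 + a) ≤ C / (d + 1) := by
  calc b / (1 + a) ≤ b / (1 + 1 / d) := by gcongr
    _ = b * d / (d + 1) := by field_simp
    _ ≤ C / (d + 1) := by gcongr; rwa [le_div_iff₀ hd] at hbC

lemma mul_one_sub_le_div_add_one {x t d C : ℝ} (hd : 0 < d) (hx : 0 ≤ x) (hxC : x ≤ C / d)
    (hdt : 1 / (d + 1) ≤ t) : x * (1 - t) ≤ C / (d + 1) := by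
  calc x * (1 - t) ≤ x * (1 - 1 / (d + 1)) := by gcongr
    _ = x * d / (d + 1) := by field_simp; ring
    _ ≤ C / (d + 1) := by gcongr; rwa [le_div_iff₀ hd] at hxC

lemma sub_div_mem_Icc_zero_one {L b : ℝ} (hL : 0 ≤ L) (hLb : L ≤ b) :
    (b - L) / b ∈ Set.Icc (0 : ℝ) 1 :=
  ⟨div_nonneg (by linarith) (by linarith), div_le_one_of_le₀ (by linarith) (by linarith)⟩

section LinearizedASGARD

variable {L m : ℝ} {τ β B : ℕ → ℝ}

lemma asgard_beta_pos (hβ0 : 0 < β 0) (hτ : ∀ k, 0 < τ k)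
    (hβrec : ∀ k, β (k + 1) = β k / (1 + τ k)) : ∀ k, 0 < β k
  | 0 => hβ0
  | k + 1 => hβrec k ▸ div_pos (asgard_beta_pos hβ0 hτ hβrec k) (by linarith [hτ k])

lemma asgard_B_succ_succ (hβrec : ∀ k, β (k + 1) = β k / (1 + τ k))
    (hBrec : ∀ k, B (k + 1) = L + m / β (k + 1)) (k : ℕ) :
    B (k + 2) = B (k + 1) + (B (k + 1) - L) * τ (k + 1) := by
  rw [hBrec (k + 1), hβrec (k + 1), hBrec k, div_div_eq_mul_div]
  ring

lemma asgard_sq_mul_B_succ_succ (hβrec : ∀ k, β (k + 1) = β k / (1 + τ k))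
    (hBrec : ∀ k, B (k + 1) = L + m / β (k + 1))
    (hcubic : ∀ k, (B (k + 1) - L) / B (k + 1) * τ (k + 1) ^ 3 + τ (k + 1) ^ 2
        + τ k ^ 2 * τ (k + 1) - τ k ^ 2 = 0) (k : ℕ) (hB : B (k + 1) ≠ 0) :
    τ (k + 1) ^ 2 * B (k + 2) = τ k ^ 2 * (1 - τ (k + 1)) * B (k + 1) := by
  have h := hcubic k
  field_simp at h
  rw [asgard_B_succ_succ hβrec hBrec k]
  linear_combination h

end LinearizedASGARD

/-- bounds `1/(k+1) ≤ τ_k ≤ 2/(k+2)`, `β_k ≤ β_0/(k+1)` and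
`τ_k² B_{k+1} ≤ B_1/(k+1)` for the parameter sequences of linearized ASGARD. -/
theorem stmt7 (L m β0 : ℝ) (hL : 0 ≤ L) (hm : 0 < m) (hβ0pos : 0 < β0)
    (τ β B : ℕ → ℝ)
    (hτpos : ∀ k, 0 < τ k) (hτ0 : τ 0 = 1)
    (hβinit : β 0 = β0)
    (hβrec : ∀ k, β (k + 1) = β k / (1 + τ k))
    (hBrec : ∀ k, B (k + 1) = L + m / β (k + 1))
    (hcubic : ∀ k, (B (k + 1) - L) / B (k + 1) * τ (k + 1) ^ 3 + τ (k + 1) ^ 2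
        + τ k ^ 2 * τ (k + 1) - τ k ^ 2 = 0) :
    ∀ k : ℕ, 1 / ((k : ℝ) + 1) ≤ τ k ∧ τ k ≤ 2 / ((k : ℝ) + 2) ∧
      β k ≤ β0 / ((k : ℝ) + 1) ∧ τ k ^ 2 * B (k + 1) ≤ B 1 / ((k : ℝ) + 1) := by
  have hβ := asgard_beta_pos (hβinit ▸ hβ0pos) hτpos hβrec
  have hLB (k : ℕ) : L < B (k + 1) := by
    rw [hBrec]; linarith [div_pos hm (hβ (k + 1))]
  intro k
  induction k with
  | zero => norm_num [hτ0, hβinit]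
  | succ k ih =>
    obtain ⟨hlow, hup, hβk, hBk⟩ := ih
    have hk : (0 : ℝ) < k + 1 := by positivity
    obtain ⟨hsq, hcube⟩ := sq_le_sq_mul_one_sub_and_le_of_cubic
      (sub_div_mem_Icc_zero_one hL (hLB k).le) (hτpos (k + 1)).le (hcubic k)
    have hlow' := one_div_add_one_le_of_le_sq_mul_one_add hk (hτpos (k + 1)) hlow hcube
    push_cast
    refine ⟨hlow', ?_, ?_, ?_⟩
    · exact (le_two_div_add_one_of_sq_le (by positivity) (hτpos _) (hτpos k).le hup hsq).trans_eq
        (by ring)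
    · rw [hβrec]
      exact div_one_add_le_div_add_one hk (hβ k).le hβk hlow
    · rw [asgard_sq_mul_B_succ_succ hβrec hBrec hcubic k (by linarith [hLB k]), mul_right_comm]
      exact mul_one_sub_le_div_add_one hk (mul_nonneg (sq_nonneg _) (by linarith [hLB k])) hBk hlow'
end

section
/- Let (τ_k)_{k≥0} be a sequence of positive reals with τ_0 = 1 such that for every k ≥ 0, τ_{k+1} ≤ (−τ_k² + √(τ_k⁴ + 4 τ_k²))/2. Then for every k ≥ 0, τ_k ≤ 2/(k+2). -/
/-- if `τ_0 = 1`, `τ_k > 0` and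
`τ_{k+1} ≤ (−τ_k² + √(τ_k⁴ + 4τ_k²))/2` for all `k`, then `τ_k ≤ 2/(k+2)`. -/
theorem stmt8 (τ : ℕ → ℝ) (hpos : ∀ k, 0 < τ k) (h0 : τ 0 = 1)
    (hrec : ∀ k, τ (k + 1) ≤ (-τ k ^ 2 + Real.sqrt (τ k ^ 4 + 4 * τ k ^ 2)) / 2) :
    ∀ k : ℕ, τ k ≤ 2 / ((k : ℝ) + 2) := by
  intro k
  induction k with
  | zero => norm_num [h0]
  | succ k ih =>
    set t := τ k with ht
    have htpos : 0 < t := hpos k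
    have hknn : (0 : ℝ) ≤ (k : ℝ) := Nat.cast_nonneg k
    set m : ℝ := (k : ℝ) + 2 with hmdef
    have hmpos : (0 : ℝ) < m := by rw [hmdef]; linarith
    have hm1 : (0 : ℝ) < m + 1 := by linarith
    have h1 : t * m ≤ 2 := by
      have := (le_div_iff₀ hmpos).mp ih
      linarith
    have htm : 0 ≤ t * m := le_of_lt (mul_pos htpos hmpos)
    have hsqrt : Real.sqrt (t ^ 4 + 4 * t ^ 2) ≤ t ^ 2 + 4 / (m + 1) := by
      have expand : (t ^ 2 + 4 / (m + 1)) ^ 2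
          = t ^ 4 + (8 * t ^ 2 * (m + 1) + 16) / (m + 1) ^ 2 := by
        field_simp
        ring
      have hkey : 4 * t ^ 2 * (m + 1) ^ 2 ≤ 8 * t ^ 2 * (m + 1) + 16 := by
        nlinarith [sq_nonneg (t * m), sq_nonneg t, mul_self_nonneg t]
      have hle : t ^ 4 + 4 * t ^ 2 ≤ (t ^ 2 + 4 / (m + 1)) ^ 2 := by
        rw [expand]
        have : 4 * t ^ 2 ≤ (8 * t ^ 2 * (m + 1) + 16) / (m + 1) ^ 2 := by
          rw [le_div_iff₀ (by positivity)]
          nlinarith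
        linarith
      calc Real.sqrt (t ^ 4 + 4 * t ^ 2) ≤ Real.sqrt ((t ^ 2 + 4 / (m + 1)) ^ 2) :=
            Real.sqrt_le_sqrt hle
        _ = t ^ 2 + 4 / (m + 1) := Real.sqrt_sq (by positivity)
    have h3 : τ (k + 1) ≤ (-t ^ 2 + (t ^ 2 + 4 / (m + 1))) / 2 :=
      le_trans (hrec k) (by linarith)
    have h2 : (-t ^ 2 + (t ^ 2 + 4 / (m + 1))) / 2 = 2 / (m + 1) := by ring
    rw [h2] at h3
    push_cast
    have hmk : m + 1 = (k : ℝ) + 1 + 2 := by rw [hmdef]; ring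
    rw [hmk] at h3
    exact h3
end

section
/- Let (B_k)_{k≥1} be a nondecreasing sequence of positive reals and let (τ_k)_{k≥0} satisfy τ_0 = 1, τ_k ∈ (0, 1) for k ≥ 1, and (1 − τ_k)/(τ_k² B_{k+1}) = 1/(τ_{k−1}² B_k) for every k ≥ 1. Then for every k ≥ 0, τ_k ≤ 2/(k+2). -/
/-- if `(B_k)_{k≥1}` is a nondecreasing sequence of positive reals,
`τ_0 = 1`, `τ_k ∈ (0,1)` for `k ≥ 1` and `(1 − τ_k)/(τ_k² B_{k+1}) = 1/(τ_{k−1}² B_k)`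
for all `k ≥ 1`, then `τ_k ≤ 2/(k+2)`. -/
theorem stmt10 (B τ : ℕ → ℝ)
    (hBpos : ∀ k, 1 ≤ k → 0 < B k) (hBmono : ∀ k, 1 ≤ k → B k ≤ B (k + 1))
    (hτ0 : τ 0 = 1) (hτmem : ∀ k, 1 ≤ k → τ k ∈ Set.Ioo (0 : ℝ) 1)
    (hrec : ∀ k : ℕ, (1 - τ (k + 1)) / (τ (k + 1) ^ 2 * B (k + 2)) = 1 / (τ k ^ 2 * B (k + 1))) :
    ∀ k : ℕ, τ k ≤ 2 / ((k : ℝ) + 2) := by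
  have hτpos : ∀ k : ℕ, 0 < τ k := by
    intro k
    cases k with
    | zero => rw [hτ0]; norm_num
    | succ n => exact (hτmem (n+1) (Nat.le_add_left 1 n)).1
  have key : ∀ k : ℕ, ((k : ℝ) + 2) / 2 ≤ 1 / τ k := by
    intro k
    induction k with
    | zero => rw [hτ0]; norm_num
    | succ n ih =>
      have ht := hτpos n
      have ht1 := hτpos (n+1)
      have hlt1 : τ (n+1) < 1 := (hτmem (n+1) (Nat.le_add_left 1 n)).2
      have hB1 : 0 < B (n+1) := hBpos _ (Nat.le_add_left 1 n)
      have hB2 : 0 < B (n+2) := hBpos _ (by omega)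
      have hBm : B (n+1) ≤ B (n+2) := hBmono _ (Nat.le_add_left 1 n)
      have hr := hrec n
      have heq : (1 - τ (n+1)) * (τ n ^ 2 * B (n+1)) = τ (n+1) ^ 2 * B (n+2) := by
        field_simp at hr
        linarith [hr]
      have hineq : τ (n+1) ^ 2 ≤ (1 - τ (n+1)) * τ n ^ 2 := by
        nlinarith [sq_nonneg (τ (n+1)), sq_nonneg (τ n)]
      set a : ℝ := ((n : ℝ) + 2) / 2 with ha
      have ha1 : 1 ≤ a := by
        have hn : (0:ℝ) ≤ n := Nat.cast_nonneg n
        rw [ha]; linarith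
      set x : ℝ := 1 / τ (n+1) with hxdef
      set y : ℝ := 1 / τ n with hydef
      have hxt : x * τ (n+1) = 1 := by rw [hxdef]; field_simp
      have hyt : y * τ n = 1 := by rw [hydef]; field_simp
      have hxpos : 0 < x := by rw [hxdef]; positivity
      have hx1 : 1 < x := by
        rw [hxdef, lt_div_iff₀ ht1]; linarith
      have hya : a ≤ y := ih
      -- x² - x ≥ y²
      have hdiv : 1 / τ n ^ 2 ≤ (1 - τ (n+1)) / τ (n+1) ^ 2 := by
        rw [div_le_div_iff₀ (by positivity) (by positivity)]
        nlinarith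
      have hy2 : y ^ 2 = 1 / τ n ^ 2 := by rw [hydef, div_pow, one_pow]
      have hx2 : x ^ 2 - x = (1 - τ (n+1)) / τ (n+1) ^ 2 := by
        rw [hxdef]; field_simp
      have hmain : y ^ 2 ≤ x ^ 2 - x := by rw [hy2, hx2]; exact hdiv
      have goal : a + 1/2 ≤ x := by
        by_contra h
        push_neg at h
        nlinarith [mul_pos (by linarith : (0:ℝ) < a + 1/2 - x) (by linarith : (0:ℝ) < x + a - 1/2)]
      have hcast : ((n:ℝ) + 1 + 2) / 2 = a + 1/2 := by rw [ha]; ring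
      rw [Nat.cast_succ, hcast]
      exact goal
  intro k
  have h := key k
  have ht := hτpos k
  have h2 : ((k:ℝ) + 2) / 2 * τ k ≤ 1 / τ k * τ k :=
    mul_le_mul_of_nonneg_right h ht.le
  rw [one_div_mul_cancel ht.ne'] at h2
  rw [le_div_iff₀ (by positivity : (0:ℝ) < (k:ℝ) + 2)]
  linarith
end

section
/- Let β_0 > 0 and let (τ_k)_{k≥0} satisfy τ_0 = 1 and 0 < τ_k ≤ 2/(k+2) for all k ≥ 1, and define β_{k+1} = β_k/(1 + τ_k) for k ≥ 0. Then for every k ≥ 0, (β_0/2) ∏_{l=1}^{k} (1 − τ_l) ≤ β_{k+1} ≤ 3 β_0 ∏_{l=1}^{k} (1 − τ_l) (with the empty product for k = 0 equal to 1). -/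
/-- with `β_0 > 0`, `τ_0 = 1`, `0 < τ_k ≤ 2/(k+2)` for `k ≥ 1` and
`β_{k+1} = β_k/(1+τ_k)`, one has
`(β_0/2) ∏_{l=1}^k (1 − τ_l) ≤ β_{k+1} ≤ 3 β_0 ∏_{l=1}^k (1 − τ_l)`. -/
theorem stmt11 (β0 : ℝ) (hβ0 : 0 < β0) (τ β : ℕ → ℝ)
    (hτ0 : τ 0 = 1)
    (hτ : ∀ k, 1 ≤ k → 0 < τ k ∧ τ k ≤ 2 / ((k : ℝ) + 2))
    (hβinit : β 0 = β0) (hβrec : ∀ k, β (k + 1) = β k / (1 + τ k)) :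
    ∀ k : ℕ, β0 / 2 * ∏ l ∈ Finset.Icc 1 k, (1 - τ l) ≤ β (k + 1) ∧
      β (k + 1) ≤ 3 * β0 * ∏ l ∈ Finset.Icc 1 k, (1 - τ l) := by
  have hP : ∀ k : ℕ, (0:ℝ) ≤ ∏ l ∈ Finset.Icc 1 k, (1 - τ l) := by
    intro k
    apply Finset.prod_nonneg
    intro l hl'
    have hl1 := (Finset.mem_Icc.mp hl').1
    have h := hτ l hl1
    have hld : (0:ℝ) < (l:ℝ)+2 := by positivity
    have h2 : (2:ℝ) ≤ (l:ℝ) + 2 := by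
      have : (1:ℝ) ≤ (l:ℝ) := by exact_mod_cast hl1
      linarith
    have : τ l ≤ 1 := le_trans h.2 (by rw [div_le_one hld]; linarith)
    linarith
  have key : ∀ k : ℕ, β0 / 2 * ∏ l ∈ Finset.Icc 1 k, (1 - τ l) ≤ β (k + 1) ∧
      β (k + 1) ≤ β0 / 2 * (6 * ((k:ℝ)+1) * ((k:ℝ)+2) / (((k:ℝ)+3) * ((k:ℝ)+4)))
        * ∏ l ∈ Finset.Icc 1 k, (1 - τ l) := by
    intro k
    induction k with
    | zero =>
      simp [hβrec, hβinit, hτ0]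
      constructor <;> norm_num
    | succ k ih =>
      obtain ⟨hl, hu⟩ := ih
      have hτk := hτ (k+1) (by omega)
      have hτpos := hτk.1
      have hτle : τ (k+1) ≤ 2 / ((k:ℝ)+3) := by
        have h2 := hτk.2
        push_cast at h2
        have : ((k:ℝ)+1) + 2 = (k:ℝ)+3 := by ring
        rw [this] at h2
        exact h2
      have hden : (0:ℝ) < (k:ℝ)+3 := by positivity
      have hτlt1 : τ (k+1) < 1 := lt_of_le_of_lt hτle (by rw [div_lt_one hden]; linarith)
      have h1τ : (0:ℝ) < 1 + τ (k+1) := by linarith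
      have hPk := hP k
      have hprodsucc : ∏ l ∈ Finset.Icc 1 (k+1), (1 - τ l)
          = (∏ l ∈ Finset.Icc 1 k, (1 - τ l)) * (1 - τ (k+1)) :=
        Finset.prod_Icc_succ_top (by omega) _
      have hβsucc : β (k + 1 + 1) = β (k+1) / (1 + τ (k+1)) := hβrec (k+1)
      have hτsq : τ (k+1)^2 * ((k:ℝ)+3)^2 ≤ 4 := by
        have h1 : τ (k+1) * ((k:ℝ)+3) ≤ 2 := by
          rw [le_div_iff₀ hden] at hτle
          linarith [hτle]
        nlinarith [h1, mul_pos hτpos hden]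
      constructor
      · rw [hβsucc, hprodsucc, le_div_iff₀ h1τ]
        have h1 : (1 - τ (k+1)) * (1 + τ (k+1)) ≤ 1 := by nlinarith
        calc β0 / 2 * ((∏ l ∈ Finset.Icc 1 k, (1 - τ l)) * (1 - τ (k+1))) * (1 + τ (k+1))
            = β0 / 2 * (∏ l ∈ Finset.Icc 1 k, (1 - τ l)) * ((1 - τ (k+1)) * (1 + τ (k+1))) := by
              ring
          _ ≤ β0 / 2 * (∏ l ∈ Finset.Icc 1 k, (1 - τ l)) * 1 := by
              apply mul_le_mul_of_nonneg_left h1; positivity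
          _ = β0 / 2 * (∏ l ∈ Finset.Icc 1 k, (1 - τ l)) := by ring
          _ ≤ β (k+1) := hl
      · rw [hβsucc, hprodsucc, div_le_iff₀ h1τ]
        have hden5 : (0:ℝ) < ((k:ℝ)+4) * ((k:ℝ)+5) := by positivity
        have hden34 : (0:ℝ) < ((k:ℝ)+3) * ((k:ℝ)+4) := by positivity
        have hC : 6 * ((k:ℝ)+1) * ((k:ℝ)+2) / (((k:ℝ)+3) * ((k:ℝ)+4))
            ≤ 6 * ((k:ℝ)+2) * ((k:ℝ)+3) / (((k:ℝ)+4) * ((k:ℝ)+5))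
              * ((1 - τ (k+1)) * (1 + τ (k+1))) := by
          rw [div_le_iff₀ hden34, div_mul_eq_mul_div, div_mul_eq_mul_div, le_div_iff₀ hden5]
          have h6 : (0:ℝ) ≤ 6*((k:ℝ)+2)*((k:ℝ)+4) := by positivity
          nlinarith [mul_le_mul_of_nonneg_left hτsq h6]
        have hcast : ((k:ℝ)+1+1) = (k:ℝ)+1+1 := rfl
        push_cast
        calc β (k+1) ≤ β0 / 2 * (6 * ((k:ℝ)+1) * ((k:ℝ)+2) / (((k:ℝ)+3) * ((k:ℝ)+4)))
              * ∏ l ∈ Finset.Icc 1 k, (1 - τ l) := hu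
          _ ≤ β0 / 2 * (6 * ((k:ℝ)+2) * ((k:ℝ)+3) / (((k:ℝ)+4) * ((k:ℝ)+5))
              * ((1 - τ (k+1)) * (1 + τ (k+1)))) * ∏ l ∈ Finset.Icc 1 k, (1 - τ l) := by
              apply mul_le_mul_of_nonneg_right _ hPk
              apply mul_le_mul_of_nonneg_left hC (by positivity)
          _ = β0 / 2 * (6 * ((k:ℝ)+1+1) * ((k:ℝ)+1+2) / (((k:ℝ)+1+3) * ((k:ℝ)+1+4)))
              * ((∏ l ∈ Finset.Icc 1 k, (1 - τ l)) * (1 - τ (k+1))) * (1 + τ (k+1)) := by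
              ring
      done
  intro k
  refine ⟨(key k).1, le_trans (key k).2 ?_⟩
  have hden34 : (0:ℝ) < ((k:ℝ)+3) * ((k:ℝ)+4) := by positivity
  have hC6 : 6 * ((k:ℝ)+1) * ((k:ℝ)+2) / (((k:ℝ)+3) * ((k:ℝ)+4)) ≤ 6 := by
    rw [div_le_iff₀ hden34]; nlinarith
  have : β0 / 2 * (6 * ((k:ℝ)+1) * ((k:ℝ)+2) / (((k:ℝ)+3) * ((k:ℝ)+4))) ≤ 3 * β0 := by
    nlinarith [hC6, hβ0.le]
  exact mul_le_mul_of_nonneg_right this (hP k)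
end

section
/- For the parameter sequences of linearized ASGARD with line search, for every k ≥ 0 one has τ_k ≤ 2/(k+2) and (β_0/(2 B_1)) τ_k² B_{k+1} ≤ β_{k+1} ≤ (1/2) ( 3 a (β_0/B_1) τ_k² L + √( (3 a (β_0/B_1) τ_k² L)² + 12 a (β_0/B_1) τ_k² m ) ). -/
/-!
Write `c_k = τ_k² B_{k+1}`. The recursion for `τ` says `c_{k+1} = (1 - τ_{k+1}) c_k`, and since
`β_{k+2} = β_{k+1} / (1 + τ_{k+1})`, the ratio `q_k = c_k / β_{k+1}` satisfies
`q_{k+1} = (1 - τ_{k+1}²) q_k` with `q_0 = 2 B_1 / β_0`.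

As `B` is nondecreasing, `τ_{k+1}² ≤ (1 - τ_{k+1}) τ_k²`, which propagates `τ_k ≤ 2 / (k + 2)`.
Hence `q_0 / 6 ≤ q_k ≤ q_0`, because `∏_{j=1}^k (1 - 4 / (j + 2)²)` telescopes to
`(k + 3)(k + 4) / (6 (k + 1)(k + 2))`. The right inequality is the lower bound on `β_{k+1}`.
The left one, `β_{k+1} B_1 ≤ 3 β_0 c_k`, together with the line-search condition multiplied by
`β_{k+1}` gives a quadratic inequality for `β_{k+1}`, whose larger root is the upper bound.
-/

theorem mul_add_three_le_two_of_sq_le_one_sub_mul_sq {s t x : ℝ} (hx : 0 ≤ x) (hs : 0 < s)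
    (hts : t ^ 2 ≤ (1 - t) * s ^ 2) (hsx : s * (x + 2) ≤ 2) : t * (x + 3) ≤ 2 := by
  by_contra! h
  have ht : 0 < t := by nlinarith
  have h1t : 0 < 1 - t := pos_of_mul_pos_left ((pow_pos ht 2).trans_le hts) (sq_nonneg s)
  have : (t * (x + 2)) ^ 2 ≤ 4 * (1 - t) :=
    calc (t * (x + 2)) ^ 2 ≤ (1 - t) * (s * (x + 2)) ^ 2 := by
          rw [mul_pow, mul_pow, ← mul_assoc]; gcongr
      _ ≤ (1 - t) * 2 ^ 2 := by gcongr
      _ = 4 * (1 - t) := by ring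
  nlinarith

theorem mul_add_two_le_two_of_sq_le_one_sub_mul_sq {τ : ℕ → ℝ} (hpos : ∀ k, 0 < τ k)
    (h0 : τ 0 ≤ 1)
    (hstep : ∀ k, τ (k + 1) ^ 2 ≤ (1 - τ (k + 1)) * τ k ^ 2) (k : ℕ) :
    τ k * (k + 2) ≤ 2 := by
  induction k with
  | zero => norm_num; linarith
  | succ k ih =>
    have := mul_add_three_le_two_of_sq_le_one_sub_mul_sq k.cast_nonneg (hpos k) (hstep k) ih
    push_cast
    linarith

section RatioBounds

variable {q t : ℕ → ℝ}

theorem antitone_of_succ_eq_one_sub_sq_mul (hq : ∀ k, 0 ≤ q k)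
    (hrec : ∀ k, q (k + 1) = (1 - t (k + 1) ^ 2) * q k) : Antitone q :=
  antitone_nat_of_succ_le fun k => by nlinarith [hrec k, hq k, sq_nonneg (t (k + 1))]

theorem le_six_mul_of_succ_eq_one_sub_sq_mul (hq : ∀ k, 0 ≤ q k) (ht : ∀ k, 0 ≤ t k)
    (ht_le : ∀ k : ℕ, t k * (k + 2) ≤ 2)
    (hrec : ∀ k, q (k + 1) = (1 - t (k + 1) ^ 2) * q k) (k : ℕ) : q 0 ≤ 6 * q k := by
  have key : ∀ k : ℕ, q 0 * ((k + 3) * (k + 4)) ≤ 6 * q k * ((k + 1) * (k + 2)) := by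
    intro k
    induction k with
    | zero => norm_num; linarith
    | succ k ih =>
      have hsq : (t (k + 1) * (k + 3)) ^ 2 ≤ 2 ^ 2 := by
        have := ht_le (k + 1)
        push_cast at this
        gcongr
        · exact mul_nonneg (ht _) (by positivity)
        · linarith
      have hfac : ((k : ℝ) + 1) * (k + 5) ≤ (1 - t (k + 1) ^ 2) * (k + 3) ^ 2 := by nlinarith
      rw [hrec]
      push_cast
      nlinarith [mul_le_mul_of_nonneg_right ih (by positivity : (0:ℝ) ≤ k + 5),
        mul_le_mul_of_nonneg_left hfac (hq k), mul_nonneg (hq k) (by positivity : (0:ℝ) ≤ k + 3)]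
  have hk : (0 : ℝ) < (k + 3) * (k + 4) := by positivity
  refine le_of_mul_le_mul_right ((key k).trans ?_) hk
  have := hq k
  gcongr <;> linarith

end RatioBounds

theorem le_half_mul_add_sqrt_of_sq_le {x A C : ℝ} (h : x ^ 2 ≤ A * x + C / 4) :
    x ≤ 1 / 2 * (A + √(A ^ 2 + C)) := by
  have : |2 * x - A| ≤ √(A ^ 2 + C) := Real.abs_le_sqrt (by nlinarith)
  linarith [le_abs_self (2 * x - A)]

theorem sq_le_of_line_search {x b b₁ s β₀ a L m : ℝ} (hx : 0 < x) (hb₁ : 0 < b₁) (hs : 0 ≤ s)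
    (hβ₀ : 0 ≤ β₀) (hratio : x * b₁ ≤ 3 * β₀ * (s * b)) (hls : b ≤ a * (L + m / x)) :
    x ^ 2 ≤ 3 * a * (β₀ / b₁) * s * L * x + 12 * a * (β₀ / b₁) * s * m / 4 := by
  have hbx : b * x ≤ a * L * x + a * m := by
    have := mul_le_mul_of_nonneg_right hls hx.le
    rwa [mul_add, add_mul, mul_assoc a (m / x), div_mul_cancel₀ m hx.ne'] at this
  have : x ^ 2 * b₁ ≤ 3 * β₀ * s * (a * L * x + a * m) := by
    nlinarith [mul_le_mul_of_nonneg_right hratio hx.le,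
      mul_le_mul_of_nonneg_left hbx (by positivity : 0 ≤ 3 * β₀ * s)]
  rw [← le_div_iff₀ hb₁] at this
  calc x ^ 2 ≤ 3 * β₀ * s * (a * L * x + a * m) / b₁ := this
    _ = _ := by ring

namespace LinearizedASGARD

variable {β₀ : ℝ} {B τ β : ℕ → ℝ}

theorem tau_pos (hτ0 : τ 0 = 1) (hτmem : ∀ k, 1 ≤ k → τ k ∈ Set.Ioo (0 : ℝ) 1) :
    ∀ k, 0 < τ k
  | 0 => hτ0 ▸ one_pos
  | k + 1 => (hτmem (k + 1) (Nat.le_add_left 1 k)).1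

theorem beta_pos (hβ₀ : 0 < β₀) (hτ : ∀ k, 0 < τ k) (hβinit : β 0 = β₀)
    (hβrec : ∀ k, β (k + 1) = β k / (1 + τ k)) : ∀ k, 0 < β k
  | 0 => hβinit ▸ hβ₀
  | k + 1 => hβrec k ▸ div_pos (beta_pos hβ₀ hτ hβinit hβrec k) (by linarith [hτ k])

theorem sq_mul_succ_eq (hBpos : ∀ k : ℕ, 0 < B (k + 1)) (hτ : ∀ k, 0 < τ k)
    (hrec : ∀ k : ℕ, (1 - τ (k + 1)) / (τ (k + 1) ^ 2 * B (k + 2)) = 1 / (τ k ^ 2 * B (k + 1)))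
    (k : ℕ) : τ (k + 1) ^ 2 * B (k + 2) = (1 - τ (k + 1)) * (τ k ^ 2 * B (k + 1)) := by
  have h := hrec k
  rw [div_eq_div_iff (mul_pos (pow_pos (hτ _) 2) (hBpos _)).ne'
    (mul_pos (pow_pos (hτ _) 2) (hBpos _)).ne'] at h
  linarith

theorem tau_mul_le_two (hBpos : ∀ k : ℕ, 0 < B (k + 1)) (hBmono : ∀ k : ℕ, B (k + 1) ≤ B (k + 2))
    (hτ : ∀ k, 0 < τ k) (hτ0 : τ 0 = 1)
    (hc : ∀ k, τ (k + 1) ^ 2 * B (k + 2) = (1 - τ (k + 1)) * (τ k ^ 2 * B (k + 1))) (k : ℕ) :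
    τ k * (k + 2) ≤ 2 := by
  refine mul_add_two_le_two_of_sq_le_one_sub_mul_sq hτ hτ0.le
    (fun k => le_of_mul_le_mul_right ?_ (hBpos k)) k
  calc τ (k + 1) ^ 2 * B (k + 1) ≤ τ (k + 1) ^ 2 * B (k + 2) := by gcongr; exact hBmono k
    _ = (1 - τ (k + 1)) * τ k ^ 2 * B (k + 1) := by rw [hc, mul_assoc]

theorem ratio_succ (hβrec : ∀ k, β (k + 1) = β k / (1 + τ k))
    (hc : ∀ k, τ (k + 1) ^ 2 * B (k + 2) = (1 - τ (k + 1)) * (τ k ^ 2 * B (k + 1))) (k : ℕ) :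
    τ (k + 1) ^ 2 * B (k + 2) / β (k + 2) =
      (1 - τ (k + 1) ^ 2) * (τ k ^ 2 * B (k + 1) / β (k + 1)) := by
  rw [hc, hβrec (k + 1), div_div_eq_mul_div]
  ring

end LinearizedASGARD

open LinearizedASGARD

theorem stmt12_general (a L m β0 : ℝ) (hβ0 : 0 < β0)
    (B τ β : ℕ → ℝ)
    (hBpos : ∀ k : ℕ, 0 < B (k + 1)) (hBmono : ∀ k : ℕ, B (k + 1) ≤ B (k + 2))
    (hτ0 : τ 0 = 1) (hτmem : ∀ k, 1 ≤ k → τ k ∈ Set.Ioo (0 : ℝ) 1)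
    (hrec : ∀ k : ℕ, (1 - τ (k + 1)) / (τ (k + 1) ^ 2 * B (k + 2)) = 1 / (τ k ^ 2 * B (k + 1)))
    (hβinit : β 0 = β0) (hβrec : ∀ k, β (k + 1) = β k / (1 + τ k))
    (hls : ∀ k : ℕ, B (k + 1) ≤ a * (L + m / β (k + 1))) :
    ∀ k : ℕ, τ k ≤ 2 / ((k : ℝ) + 2) ∧
      β0 / (2 * B 1) * (τ k ^ 2 * B (k + 1)) ≤ β (k + 1) ∧
      β (k + 1) ≤ (1 / 2) * (3 * a * (β0 / B 1) * τ k ^ 2 * L +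
        Real.sqrt ((3 * a * (β0 / B 1) * τ k ^ 2 * L) ^ 2
          + 12 * a * (β0 / B 1) * τ k ^ 2 * m)) := by
  have hτ := tau_pos hτ0 hτmem
  have hβ := beta_pos hβ0 hτ hβinit hβrec
  have hc := sq_mul_succ_eq hBpos hτ hrec
  have hτle := tau_mul_le_two hBpos hBmono hτ hτ0 hc
  set q : ℕ → ℝ := fun k => τ k ^ 2 * B (k + 1) / β (k + 1) with hq_def
  have hq : ∀ k, 0 ≤ q k := fun k => div_nonneg (by have := hBpos k; positivity) (hβ _).le
  have hq_rec := ratio_succ hβrec hc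
  have hq0 : q 0 = 2 * B 1 / β0 := by
    simp only [hq_def, hτ0, hβrec, hβinit]
    ring
  intro k
  have hq_le : q k ≤ q 0 := antitone_of_succ_eq_one_sub_sq_mul hq hq_rec k.zero_le
  have hle_q : q 0 ≤ 6 * q k :=
    le_six_mul_of_succ_eq_one_sub_sq_mul hq (fun k => (hτ k).le) hτle hq_rec k
  rw [hq0, hq_def, div_le_div_iff₀ (hβ _) hβ0] at hq_le
  rw [hq0, hq_def, div_le_iff₀ hβ0, mul_div_assoc', div_mul_eq_mul_div, le_div_iff₀ (hβ _)] at hle_q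
  refine ⟨(le_div_iff₀ (by positivity)).2 (hτle k), ?_, le_half_mul_add_sqrt_of_sq_le ?_⟩
  · rw [div_mul_eq_mul_div, div_le_iff₀ (by linarith [hBpos 0])]
    linarith
  · exact sq_le_of_line_search (hβ _) (hBpos 0) (sq_nonneg _) hβ0.le (by linarith) (hls k)

/-- parameter bounds for linearized ASGARD with line search:
`τ_k ≤ 2/(k+2)` and
`(β_0/(2B_1)) τ_k² B_{k+1} ≤ β_{k+1} ≤ (1/2)(3a(β_0/B_1)τ_k² L + √((3a(β_0/B_1)τ_k² L)² + 12a(β_0/B_1)τ_k² m))`. -/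
theorem stmt12 (a L m β0 : ℝ) (ha : 1 < a) (hL : 0 ≤ L) (hm : 0 < m) (hβ0 : 0 < β0)
    (B τ β : ℕ → ℝ)
    (hBpos : ∀ k : ℕ, 0 < B (k + 1)) (hBmono : ∀ k : ℕ, B (k + 1) ≤ B (k + 2))
    (hτ0 : τ 0 = 1) (hτmem : ∀ k, 1 ≤ k → τ k ∈ Set.Ioo (0 : ℝ) 1)
    (hrec : ∀ k : ℕ, (1 - τ (k + 1)) / (τ (k + 1) ^ 2 * B (k + 2)) = 1 / (τ k ^ 2 * B (k + 1)))
    (hβinit : β 0 = β0) (hβrec : ∀ k, β (k + 1) = β k / (1 + τ k))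
    (hls : ∀ k : ℕ, B (k + 1) ≤ a * (L + m / β (k + 1))) :
    ∀ k : ℕ, τ k ≤ 2 / ((k : ℝ) + 2) ∧
      β0 / (2 * B 1) * (τ k ^ 2 * B (k + 1)) ≤ β (k + 1) ∧
      β (k + 1) ≤ (1 / 2) * (3 * a * (β0 / B 1) * τ k ^ 2 * L +
        Real.sqrt ((3 * a * (β0 / B 1) * τ k ^ 2 * L) ^ 2
          + 12 * a * (β0 / B 1) * τ k ^ 2 * m)) :=
  stmt12_general a L m β0 hβ0 B τ β hBpos hBmono hτ0 hτmem hrec hβinit hβrec hls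
end

section
/- Infeasibility bound for linearized ASGARD on equality-constrained problems: under the same assumptions and algorithm as in the equality-constrained setting (h = ι_{{c}} and (x*, y*) a saddle point of the Lagrangian), for every k ≥ 0: ‖M x̄^{k+1} − c‖_{S⁻¹} ≤ (β_0/(k+1)) [ ‖y* − ẏ‖_S + ( ‖y* − ẏ‖²_S + (B_1/β_0) ‖x̃⁰ − x*‖² )^{1/2} ]. -/
/-!
Write `F_β(x) = f x + g x + h_β(M x; ẏ)`. One step of the algorithm combines the descent lemma
for `f`, the three-point inequality of the proximal step for `g`, and an exact quadratic identity
for `h_β`, giving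
`F_{β_{k+1}}(x̄^{k+1}) - F⋆ ≤ (1 - τ_k) (F_{β_k}(x̄^k) - F⋆)
  + τ_k² B_{k+1} / 2 (‖x̃^k - x⋆‖² - ‖x̃^{k+1} - x⋆‖²)`.
The cubic defining `τ_{k+1}` is exactly `τ_{k+1}² B_{k+2} = (1 - τ_{k+1}) τ_k² B_{k+1}`, so this
telescopes to `F_{β_{k+1}}(x̄^{k+1}) - F⋆ ≤ τ_k² B_{k+1} / 2 ‖x̃⁰ - x⋆‖²`, and `τ_k ≥ 1/(k+1)`
gives `β_{k+1} ≤ β_0/(k+2)` and `τ_k² B_{k+1} ≤ B_1/(k+1)`. The saddle point bounds the smoothed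
gap from below by `⟪M x̄ - c, ẏ - y⋆⟫ + ‖M x̄ - c‖²_{S⁻¹} / (2β)`, and Cauchy–Schwarz turns this
into a quadratic inequality for `‖M x̄ - c‖_{S⁻¹}` whose larger root is the bound.
-/

open scoped Classical RealInnerProductSpace
open Filter Topology

section Smooth

variable {H : Type*} [NormedAddCommGroup H] [InnerProductSpace ℝ H] [CompleteSpace H]
  {f : H → ℝ}

theorem HasGradientAt.hasDerivAt_add_smul {g x d : H} {t : ℝ}
    (hf : HasGradientAt f g (x + t • d)) :
    HasDerivAt (fun s : ℝ => f (x + s • d)) ⟪g, d⟫ t := by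
  have hline : HasDerivAt (fun s : ℝ => x + s • d) d t := by
    simpa using ((hasDerivAt_id t).smul_const d).const_add x
  exact hf.hasFDerivAt.comp_hasDerivAt t hline

theorem ConvexOn.add_inner_gradient_le {g x : H} (hcvx : ConvexOn ℝ Set.univ f)
    (hf : HasGradientAt f g x) (y : H) : f x + ⟪g, y - x⟫ ≤ f y := by
  have hline : ConvexOn ℝ Set.univ (fun s : ℝ => f (x + s • (y - x))) := by
    simpa [Function.comp_def, AffineMap.lineMap_apply_module', add_comm] using
      hcvx.comp_affineMap (AffineMap.lineMap x y)
  have hderiv := HasGradientAt.hasDerivAt_add_smul (d := y - x) (t := 0) (by simpa using hf)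
  have := hline.le_slope_of_hasDerivAt (Set.mem_univ 0) (Set.mem_univ 1) one_pos hderiv
  simp only [slope_def_field, one_smul, add_sub_cancel, zero_smul, add_zero, sub_zero, div_one]
    at this
  linarith

theorem le_add_inner_add_mul_sq_of_lipschitz_gradient {f' : H → H} {L : ℝ}
    (hf : ∀ x, HasGradientAt f (f' x) x) (hlip : ∀ x y, ‖f' x - f' y‖ ≤ L * ‖x - y‖)
    (x d : H) : f (x + d) ≤ f x + ⟪f' x, d⟫ + L / 2 * ‖d‖ ^ 2 := by
  set φ : ℝ → ℝ := fun t => f (x + t • d) - t * ⟪f' x, d⟫ - L * ‖d‖ ^ 2 / 2 * t ^ 2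
  have hφ : ∀ t, HasDerivAt φ (⟪f' (x + t • d) - f' x, d⟫ - L * ‖d‖ ^ 2 * t) t := by
    intro t
    have := (((hf (x + t • d)).hasDerivAt_add_smul (x := x) (d := d)).sub
      ((hasDerivAt_id t).mul_const ⟪f' x, d⟫)).sub
      ((hasDerivAt_pow 2 t).const_mul (L * ‖d‖ ^ 2 / 2))
    refine this.congr_deriv ?_
    rw [inner_sub_left]
    ring
  have hanti : AntitoneOn φ (Set.Icc 0 1) := by
    refine antitoneOn_of_hasDerivWithinAt_nonpos (convex_Icc 0 1)
      (fun t _ => (hφ t).continuousAt.continuousWithinAt) (fun t _ => (hφ t).hasDerivWithinAt) ?_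
    intro t ht
    rw [interior_Icc] at ht
    have hlipt : ‖f' (x + t • d) - f' x‖ ≤ L * (t * ‖d‖) := by
      simpa [norm_smul, abs_of_pos ht.1] using hlip (x + t • d) x
    nlinarith [real_inner_le_norm (f' (x + t • d) - f' x) d, norm_nonneg d]
  have h01 := hanti (Set.left_mem_Icc.2 zero_le_one) (Set.right_mem_Icc.2 zero_le_one) zero_le_one
  have hφ0 : φ 0 = f x := by simp [φ]
  have hφ1 : φ 1 = f (x + d) - ⟪f' x, d⟫ - L * ‖d‖ ^ 2 / 2 := by simp [φ]
  linarith

end Smooth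

section Prox

variable {H : Type*} [NormedAddCommGroup H] [InnerProductSpace ℝ H]

theorem norm_convexComb_sub_sq (x y u : H) (t : ℝ) :
    ‖(1 - t) • x + t • y - u‖ ^ 2
      = (1 - t) * ‖x - u‖ ^ 2 + t * ‖y - u‖ ^ 2 - t * (1 - t) * ‖y - x‖ ^ 2 := by
  have hx : (1 - t) • x + t • y - u = (x - u) + t • ((y - u) - (x - u)) := by module
  have hy : y - x = (y - u) - (x - u) := by abel
  rw [hx, hy]
  generalize x - u = a
  generalize y - u = b
  rw [norm_add_sq_real, norm_smul, real_inner_smul_right, mul_pow, Real.norm_eq_abs, sq_abs,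
    inner_sub_right, real_inner_self_eq_norm_sq, norm_sub_sq_real b a, real_inner_comm b a]
  ring

theorem ConvexOn.add_half_mul_sq_le_of_isMinOn {s : Set H} {g : H → ℝ} (hg : ConvexOn ℝ s g)
    {κ : ℝ} {p u z : H} (hp : p ∈ s) (hz : z ∈ s)
    (hmin : IsMinOn (fun w => g w + κ / 2 * ‖w - u‖ ^ 2) s p) :
    g p + κ / 2 * ‖p - u‖ ^ 2 + κ / 2 * ‖z - p‖ ^ 2 ≤ g z + κ / 2 * ‖z - u‖ ^ 2 := by
  -- compare `p` with `(1 - t) • p + t • z` and let `t → 0⁺`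
  have hstep : ∀ t ∈ Set.Ioc (0 : ℝ) 1,
      g p + κ / 2 * ‖p - u‖ ^ 2 + (1 - t) * (κ / 2 * ‖z - p‖ ^ 2)
        ≤ g z + κ / 2 * ‖z - u‖ ^ 2 := by
    rintro t ⟨ht0, ht1⟩
    have hmem : (1 - t) • p + t • z ∈ s := hg.1 hp hz (by linarith) ht0.le (by ring)
    have hmin_t := isMinOn_iff.1 hmin _ hmem
    have hg_t := hg.2 hp hz (by linarith : 0 ≤ 1 - t) ht0.le (by ring)
    simp only [smul_eq_mul, norm_convexComb_sub_sq] at hmin_t hg_t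
    nlinarith
  have hcont : Continuous fun t : ℝ =>
      g p + κ / 2 * ‖p - u‖ ^ 2 + (1 - t) * (κ / 2 * ‖z - p‖ ^ 2) := by
    fun_prop
  have hlim : Tendsto (fun t : ℝ => g p + κ / 2 * ‖p - u‖ ^ 2 + (1 - t) * (κ / 2 * ‖z - p‖ ^ 2))
      (𝓝[>] 0) (𝓝 (g p + κ / 2 * ‖p - u‖ ^ 2 + κ / 2 * ‖z - p‖ ^ 2)) := by
    simpa using (hcont.tendsto 0).mono_left nhdsWithin_le_nhds
  exact le_of_tendsto hlim (by
    filter_upwards [Ioc_mem_nhdsGT zero_lt_one] with t ht using hstep t ht)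

theorem ConvexOn.linearized_prox_le {s : Set H} {g : H → ℝ} (hg : ConvexOn ℝ s g)
    {κ : ℝ} (hκ : κ ≠ 0) {x d p z : H} (hp : p ∈ s) (hz : z ∈ s)
    (hmin : IsMinOn (fun w => g w + κ / 2 * ‖w - x + κ⁻¹ • d‖ ^ 2) s p) :
    g p + ⟪d, p - x⟫ + κ / 2 * ‖p - x‖ ^ 2 + κ / 2 * ‖z - p‖ ^ 2
      ≤ g z + ⟪d, z - x⟫ + κ / 2 * ‖z - x‖ ^ 2 := by
  have hexpand : ∀ w : H, κ / 2 * ‖w - (x - κ⁻¹ • d)‖ ^ 2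
      = ⟪d, w - x⟫ + κ / 2 * ‖w - x‖ ^ 2 + κ⁻¹ / 2 * ‖d‖ ^ 2 := by
    intro w
    rw [sub_sub_eq_add_sub, add_comm, add_sub_assoc, norm_add_sq_real, norm_smul,
      real_inner_smul_left, mul_pow, Real.norm_eq_abs, sq_abs, real_inner_comm]
    field_simp
    ring
  have h := hg.add_half_mul_sq_le_of_isMinOn hp hz (u := x - κ⁻¹ • d) (κ := κ)
    (by simpa only [sub_sub_eq_add_sub, sub_add_eq_add_sub] using hmin)
  rw [hexpand, hexpand] at h
  linarith

theorem ConvexOn.map_convexComb_le_of_mem_or_eq_one {s : Set H} {g : H → ℝ}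
    (hg : ConvexOn ℝ s g) {τ : ℝ} (hτ0 : 0 ≤ τ) (hτ1 : τ ≤ 1) {x y : H} (hx : x ∈ s ∨ τ = 1)
    (hy : y ∈ s) : g ((1 - τ) • x + τ • y) ≤ (1 - τ) * g x + τ * g y := by
  rcases hx with hx | rfl
  · exact hg.2 hx hy (sub_nonneg.2 hτ1) hτ0 (by ring)
  · simp

theorem Convex.convexComb_iterate_mem {s : Set H} (hs : Convex ℝ s) {τ : ℕ → ℝ} (hτ0 : τ 0 = 1)
    (hτ_nonneg : ∀ k, 0 ≤ τ k) (hτ_le : ∀ k, τ k ≤ 1) {x y : ℕ → H} (hy : ∀ k, y (k + 1) ∈ s)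
    (hx : ∀ k, x (k + 1) = (1 - τ k) • x k + τ k • y (k + 1)) : ∀ k, x (k + 1) ∈ s
  | 0 => by simpa [hx 0, hτ0] using hy 0
  | k + 1 => by
    rw [hx]
    exact hs (Convex.convexComb_iterate_mem hs hτ0 hτ_nonneg hτ_le hy hx k) (hy _)
      (sub_nonneg.2 (hτ_le _)) (hτ_nonneg _) (by ring)

end Prox

namespace ContinuousLinearMap

variable {G : Type*} [NormedAddCommGroup G] [InnerProductSpace ℝ G] {S T : G →L[ℝ] G}

theorem IsPositive.of_leftInverse (hS : S.IsPositive) (hST : Function.LeftInverse S T) :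
    T.IsPositive := by
  refine (isPositive_iff T).2 ⟨fun x y => ?_, fun x => ?_⟩
  · calc ⟪T x, y⟫ = ⟪T x, S (T y)⟫ := by rw [hST]
      _ = ⟪S (T x), T y⟫ := (hS.inner_left_eq_inner_right _ _).symm
      _ = ⟪x, T y⟫ := by rw [hST]
  · simpa [hST x] using hS.inner_nonneg_right (T x)

theorem IsPositive.inner_sq_le (hT : T.IsPositive) (u w : G) :
    ⟪u, T w⟫ ^ 2 ≤ ⟪u, T u⟫ * ⟪w, T w⟫ := by
  have hsymm : ⟪w, T u⟫ = ⟪u, T w⟫ := by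
    rw [← hT.inner_left_eq_inner_right, real_inner_comm]
  have h := discrim_le_zero (K := ℝ) (a := ⟪w, T w⟫) (b := 2 * ⟪u, T w⟫) (c := ⟪u, T u⟫)
    fun t => by
      have := hT.inner_nonneg_right (u + t • w)
      simp only [map_add, map_smul, inner_add_left, inner_add_right, real_inner_smul_left,
        real_inner_smul_right, hsymm] at this
      linarith
  rw [discrim] at h
  linarith

theorem IsPositive.inner_le_sqrt_mul_sqrt (hT : T.IsPositive) (hTS : Function.LeftInverse T S)
    (u w : G) : ⟪u, w⟫ ≤ √⟪u, T u⟫ * √⟪w, S w⟫ := by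
  have hw : ⟪S w, T (S w)⟫ = ⟪w, S w⟫ := by rw [hTS, real_inner_comm]
  calc ⟪u, w⟫ = ⟪u, T (S w)⟫ := by rw [hTS]
    _ ≤ √(⟪u, T u⟫ * ⟪w, S w⟫) := Real.le_sqrt_of_sq_le (hw ▸ hT.inner_sq_le u (S w))
    _ = √⟪u, T u⟫ * √⟪w, S w⟫ := Real.sqrt_mul (hT.inner_nonneg_right u) _

end ContinuousLinearMap

section Smoothing

variable {G : Type*} [NormedAddCommGroup G] [InnerProductSpace ℝ G]

-- `h_β(y; ẏ)` of the paper for `h = ι_{c}`, with `T` standing for `S⁻¹`.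
noncomputable def smoothedIndicator (T : G →L[ℝ] G) (c ydot : G) (β : ℝ) (y : G) : ℝ :=
  ⟪y - c, ydot⟫ + 1 / (2 * β) * ⟪y - c, T (y - c)⟫

theorem smoothedIndicator_convexComb_le {T : G →L[ℝ] G} (hT : T.IsPositive) (c ydot : G)
    {τ β : ℝ} (hτ0 : 0 ≤ τ) (hτ1 : τ ≤ 1) (hβ : 0 < β) (y b₀ b₁ : G) :
    smoothedIndicator T c ydot β ((1 - τ) • y + τ • b₁) ≤
      (1 - τ) * smoothedIndicator T c ydot ((1 + τ) * β) y
        + τ * ⟪b₁ - c, ydot + β⁻¹ • T ((1 - τ) • y + τ • b₀ - c)⟫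
        + τ ^ 2 / (2 * β) * ⟪b₁ - b₀, T (b₁ - b₀)⟫ := by
  have hsymm : ∀ u w, ⟪u, T w⟫ = ⟪w, T u⟫ := fun u w => by
    rw [← hT.inner_left_eq_inner_right, real_inner_comm]
  have hshift : ∀ b : G, (1 - τ) • y + τ • b - c = (1 - τ) • (y - c) + τ • (b - c) := fun b => by
    module
  set yh := (1 - τ) • y + τ • b₀ - c
  -- the slack is a sum of two `T`-quadratic terms
  have key : (1 - τ) * smoothedIndicator T c ydot ((1 + τ) * β) y
        + τ * ⟪b₁ - c, ydot + β⁻¹ • T yh⟫ + τ ^ 2 / (2 * β) * ⟪b₁ - b₀, T (b₁ - b₀)⟫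
        - smoothedIndicator T c ydot β ((1 - τ) • y + τ • b₁)
      = (1 - τ) / (2 * ((1 + τ) * β)) * ⟪(y - c) - (1 + τ) • yh, T ((y - c) - (1 + τ) • yh)⟫
        + τ ^ 2 / (2 * β) * ⟪yh, T yh⟫ := by
    have hb : b₁ - b₀ = (b₁ - c) - (b₀ - c) := by abel
    simp only [smoothedIndicator, yh, hshift, hb]
    generalize y - c = a
    generalize b₀ - c = u₀
    generalize b₁ - c = u₁
    simp only [map_add, map_sub, map_smul, inner_add_left, inner_add_right, inner_sub_left,
      inner_sub_right, real_inner_smul_left, real_inner_smul_right, smul_add, smul_smul]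
    simp only [hsymm u₀ a, hsymm u₁ a, hsymm u₁ u₀]
    field_simp
    ring
  have h₁ : 0 ≤ (1 - τ) / (2 * ((1 + τ) * β)) *
      ⟪(y - c) - (1 + τ) • yh, T ((y - c) - (1 + τ) • yh)⟫ :=
    mul_nonneg (div_nonneg (by linarith) (by positivity)) (hT.inner_nonneg_right _)
  have h₂ : 0 ≤ τ ^ 2 / (2 * β) * ⟪yh, T yh⟫ :=
    mul_nonneg (by positivity) (hT.inner_nonneg_right _)
  linarith

end Smoothing

section Step

variable {H G : Type*} [NormedAddCommGroup H] [InnerProductSpace ℝ H] [CompleteSpace H]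
  [NormedAddCommGroup G] [InnerProductSpace ℝ G] [CompleteSpace G]

theorem ConvexOn.le_of_accelerated_step {f : H → ℝ} {f' : H → H} {L τ : ℝ}
    (hcvx : ConvexOn ℝ Set.univ f) (hf : ∀ x, HasGradientAt f (f' x) x)
    (hlip : ∀ x y, ‖f' x - f' y‖ ≤ L * ‖x - y‖) (hτ0 : 0 ≤ τ) (hτ1 : τ ≤ 1) (x y y' z : H) :
    f ((1 - τ) • x + τ • y') ≤ (1 - τ) * f x + τ * f z
      + τ * ⟪f' ((1 - τ) • x + τ • y), y' - z⟫ + L / 2 * τ ^ 2 * ‖y' - y‖ ^ 2 := by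
  set xh := (1 - τ) • x + τ • y
  have hdescent := le_add_inner_add_mul_sq_of_lipschitz_gradient hf hlip xh (τ • (y' - y))
  have hx := mul_le_mul_of_nonneg_left (hcvx.add_inner_gradient_le (hf xh) x) (sub_nonneg.2 hτ1)
  have hz := mul_le_mul_of_nonneg_left (hcvx.add_inner_gradient_le (hf xh) z) hτ0
  have hstep : xh + τ • (y' - y) = (1 - τ) • x + τ • y' := by simp only [xh]; module
  have hdir : τ • (y' - y) = (1 - τ) • (x - xh) + τ • (z - xh) + τ • (y' - z) := by
    simp only [xh]; module
  rw [hstep, norm_smul, mul_pow, Real.norm_eq_abs, sq_abs, hdir] at hdescent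
  simp only [inner_add_right, real_inner_smul_right] at hdescent
  linarith

theorem smoothedIndicator_map_convexComb_le {M : H →L[ℝ] G} {T : G →L[ℝ] G} (hT : T.IsPositive)
    {nM : ℝ} (hM : ∀ x, ⟪M x, T (M x)⟫ ≤ nM ^ 2 * ‖x‖ ^ 2) {c : G} (ydot : G) {τ β : ℝ}
    (hτ0 : 0 ≤ τ) (hτ1 : τ ≤ 1) (hβ : 0 < β) {z : H} (hz : M z = c) (x y y' : H) :
    smoothedIndicator T c ydot β (M ((1 - τ) • x + τ • y')) ≤
      (1 - τ) * smoothedIndicator T c ydot ((1 + τ) * β) (M x)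
        + τ * ⟪(ContinuousLinearMap.adjoint M) (ydot + β⁻¹ • T (M ((1 - τ) • x + τ • y) - c)),
            y' - z⟫
        + nM ^ 2 / (2 * β) * τ ^ 2 * ‖y' - y‖ ^ 2 := by
  have h := smoothedIndicator_convexComb_le hT c ydot hτ0 hτ1 hβ (M x) (M y) (M y')
  have hquad : ⟪M y' - M y, T (M y' - M y)⟫ ≤ nM ^ 2 * ‖y' - y‖ ^ 2 := by
    simpa only [map_sub] using hM (y' - y)
  have hcomb : ∀ a b : H, M ((1 - τ) • a + τ • b) = (1 - τ) • M a + τ • M b := fun a b => by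
    simp only [map_add, map_smul]
  rw [ContinuousLinearMap.adjoint_inner_left, map_sub M, hz, real_inner_comm, hcomb, hcomb]
  have := mul_le_mul_of_nonneg_left hquad (by positivity : 0 ≤ τ ^ 2 / (2 * β))
  linarith [show τ ^ 2 / (2 * β) * (nM ^ 2 * ‖y' - y‖ ^ 2)
    = nM ^ 2 / (2 * β) * τ ^ 2 * ‖y' - y‖ ^ 2 by ring]

theorem asgard_smoothedGap_step {f : H → ℝ} {f' : H → H} {L : ℝ} (hcvx : ConvexOn ℝ Set.univ f)
    (hf : ∀ x, HasGradientAt f (f' x) x) (hlip : ∀ x y, ‖f' x - f' y‖ ≤ L * ‖x - y‖)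
    {s : Set H} {g : H → ℝ} (hg : ConvexOn ℝ s g)
    {M : H →L[ℝ] G} {T : G →L[ℝ] G} (hT : T.IsPositive)
    {nM : ℝ} (hM : ∀ x, ⟪M x, T (M x)⟫ ≤ nM ^ 2 * ‖x‖ ^ 2) {c : G} (ydot : G)
    {z : H} (hzs : z ∈ s) (hz : M z = c)
    {τ β B : ℝ} (hτ0 : 0 < τ) (hτ1 : τ ≤ 1) (hβ : 0 < β) (hB : L + nM ^ 2 / β ≤ B) (hB0 : 0 < B)
    {xb xt xt' xh v xb' : H} (hxb : xb ∈ s ∨ τ = 1) (hxt' : xt' ∈ s)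
    (hxh : xh = (1 - τ) • xb + τ • xt)
    (hv : v = ContinuousLinearMap.adjoint M (ydot + β⁻¹ • T (M xh - c)))
    (hmin : IsMinOn (fun w => g w + τ * B / 2 * ‖w - xt + (τ * B)⁻¹ • (f' xh + v)‖ ^ 2) s xt')
    (hxb' : xb' = (1 - τ) • xb + τ • xt') :
    f xb' + g xb' + smoothedIndicator T c ydot β (M xb') - (f z + g z) ≤
      (1 - τ) * (f xb + g xb + smoothedIndicator T c ydot ((1 + τ) * β) (M xb) - (f z + g z))
        + τ ^ 2 * B / 2 * (‖xt - z‖ ^ 2 - ‖xt' - z‖ ^ 2) := by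
  subst hxb'
  have hf_step := hcvx.le_of_accelerated_step hf hlip hτ0.le hτ1 xb xt xt' z
  have hh_step := smoothedIndicator_map_convexComb_le hT hM ydot hτ0.le hτ1 hβ hz xb xt xt'
  rw [← hxh] at hf_step hh_step
  rw [← hv] at hh_step
  have hg_step := hg.map_convexComb_le_of_mem_or_eq_one hτ0.le hτ1 hxb hxt'
  have hprox := hg.linearized_prox_le (mul_pos hτ0 hB0).ne' hxt' hzs hmin
  rw [norm_sub_rev z xt', norm_sub_rev z xt] at hprox
  have hlin : ∀ a b : H, ⟪a + b, xt' - xt⟫ - ⟪a + b, z - xt⟫ = ⟪a, xt' - z⟫ + ⟪b, xt' - z⟫ :=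
    fun a b => by rw [← inner_sub_right, sub_sub_sub_cancel_right, inner_add_left]
  have hquad : (L / 2 + nM ^ 2 / (2 * β)) * τ ^ 2 * ‖xt' - xt‖ ^ 2
      ≤ τ * (τ * B / 2 * ‖xt' - xt‖ ^ 2) := by
    have : L / 2 + nM ^ 2 / (2 * β) ≤ B / 2 := by
      rw [div_mul_eq_div_div_swap]; linarith
    nlinarith [mul_le_mul_of_nonneg_right this (by positivity : 0 ≤ τ ^ 2 * ‖xt' - xt‖ ^ 2)]
  linarith [mul_le_mul_of_nonneg_left hprox hτ0.le, congrArg (τ * ·) (hlin (f' xh) v)]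

end Step

theorem cubic_root_lt_one {a s t : ℝ} (ha : 0 ≤ a) (ht : 0 < t)
    (h : a * t ^ 3 + t ^ 2 + s ^ 2 * t - s ^ 2 = 0) : t < 1 := by
  nlinarith [mul_nonneg ha (pow_pos ht 3).le, sq_nonneg s]

theorem inv_add_two_le_cubic_root {a s t n : ℝ} (ha : a ≤ 1) (ht : 0 < t) (hn : 0 ≤ n)
    (hs : 1 / (n + 1) ≤ s) (h : a * t ^ 3 + t ^ 2 + s ^ 2 * t - s ^ 2 = 0) :
    1 / (n + 2) ≤ t := by
  rw [div_le_iff₀ (by positivity)]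
  rw [div_le_iff₀ (by positivity)] at hs
  by_contra! hlt
  set w := t * (n + 2)
  have hw : 0 < w := by positivity
  have hdecrease : 1 - t ≤ (n + 1) ^ 2 * t ^ 2 * (1 + t) := by
    have hs2 : 1 ≤ s ^ 2 * (n + 1) ^ 2 := by nlinarith
    have ht1 : 0 ≤ 1 - t := by nlinarith
    have hst : s ^ 2 * (1 - t) ≤ t ^ 2 * (1 + t) := by
      nlinarith [mul_le_mul_of_nonneg_right ha (pow_pos ht 3).le]
    nlinarith [mul_le_mul_of_nonneg_right hs2 ht1,
      mul_le_mul_of_nonneg_left hst (sq_nonneg (n + 1))]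
  have hlhs : (n + 2) ^ 2 * (n + 1) < (1 - t) * (n + 2) ^ 3 := by
    have : (1 - t) * (n + 2) ^ 3 = (n + 2) ^ 3 - (n + 2) ^ 2 * w := by ring
    rw [this]
    nlinarith
  have hrhs : (n + 1) ^ 2 * t ^ 2 * (1 + t) * (n + 2) ^ 3 ≤ (n + 1) ^ 2 * (n + 3) := by
    have : (n + 1) ^ 2 * t ^ 2 * (1 + t) * (n + 2) ^ 3 = (n + 1) ^ 2 * w ^ 2 * (n + 2 + w) := by
      ring
    rw [this, mul_assoc]
    have hw2 : w ^ 2 * (n + 2 + w) ≤ 1 * (n + 3) :=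
      mul_le_mul (by nlinarith) (by linarith) (by positivity) zero_le_one
    nlinarith [mul_le_mul_of_nonneg_left hw2 (sq_nonneg (n + 1))]
  nlinarith [mul_le_mul_of_nonneg_right hdecrease (by positivity : (0 : ℝ) ≤ (n + 2) ^ 3)]

-- The parameter updates of Algorithm 1, with `nM` standing for `‖M‖_{S⁻¹}`.
structure IsASGARDSchedule (L nM : ℝ) (τ β B : ℕ → ℝ) : Prop where
  L_nonneg : 0 ≤ L
  nM_pos : 0 < nM
  beta_zero_pos : 0 < β 0
  tau_zero : τ 0 = 1
  tau_pos : ∀ k, 0 < τ k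
  beta_succ : ∀ k, β (k + 1) = β k / (1 + τ k)
  B_succ : ∀ k, B (k + 1) = L + nM ^ 2 / β (k + 1)
  cubic : ∀ k, (B (k + 1) - L) / B (k + 1) * τ (k + 1) ^ 3 + τ (k + 1) ^ 2
    + τ k ^ 2 * τ (k + 1) - τ k ^ 2 = 0

namespace IsASGARDSchedule

variable {L nM : ℝ} {τ β B : ℕ → ℝ}

theorem beta_pos (hP : IsASGARDSchedule L nM τ β B) : ∀ k, 0 < β k
  | 0 => hP.beta_zero_pos
  | k + 1 => by
    rw [hP.beta_succ]
    exact div_pos (hP.beta_pos k) (by linarith [hP.tau_pos k])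

theorem L_lt_B (hP : IsASGARDSchedule L nM τ β B) (k : ℕ) : L < B (k + 1) := by
  rw [hP.B_succ]
  linarith [div_pos (pow_pos hP.nM_pos 2) (hP.beta_pos (k + 1))]

theorem B_pos (hP : IsASGARDSchedule L nM τ β B) (k : ℕ) : 0 < B (k + 1) :=
  hP.L_nonneg.trans_lt (hP.L_lt_B k)

theorem cubic_coeff_nonneg (hP : IsASGARDSchedule L nM τ β B) (k : ℕ) :
    0 ≤ (B (k + 1) - L) / B (k + 1) :=
  div_nonneg (sub_nonneg.2 (hP.L_lt_B k).le) (hP.B_pos k).le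

theorem cubic_coeff_le_one (hP : IsASGARDSchedule L nM τ β B) (k : ℕ) :
    (B (k + 1) - L) / B (k + 1) ≤ 1 :=
  (div_le_one (hP.B_pos k)).2 (by linarith [hP.L_nonneg])

theorem tau_le_one (hP : IsASGARDSchedule L nM τ β B) : ∀ k, τ k ≤ 1
  | 0 => hP.tau_zero.le
  | k + 1 => (cubic_root_lt_one (hP.cubic_coeff_nonneg k) (hP.tau_pos (k + 1)) (hP.cubic k)).le

theorem inv_le_tau (hP : IsASGARDSchedule L nM τ β B) : ∀ k : ℕ, 1 / ((k : ℝ) + 1) ≤ τ k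
  | 0 => by simp [hP.tau_zero]
  | k + 1 => by
    have := inv_add_two_le_cubic_root (hP.cubic_coeff_le_one k) (hP.tau_pos (k + 1))
      k.cast_nonneg (hP.inv_le_tau k) (hP.cubic k)
    rwa [Nat.cast_succ, add_assoc, one_add_one_eq_two]

theorem tau_sq_mul_B_succ (hP : IsASGARDSchedule L nM τ β B) (k : ℕ) :
    τ (k + 1) ^ 2 * B (k + 2) = (1 - τ (k + 1)) * (τ k ^ 2 * B (k + 1)) := by
  have hB : B (k + 2) = B (k + 1) + τ (k + 1) * (B (k + 1) - L) := by
    have := hP.beta_pos (k + 1)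
    have := hP.tau_pos (k + 1)
    rw [hP.B_succ (k + 1), hP.beta_succ (k + 1), hP.B_succ k]
    field_simp
    ring
  have hcubic := hP.cubic k
  field_simp [(hP.B_pos k).ne'] at hcubic
  rw [hB]
  linear_combination hcubic

theorem tau_sq_mul_B_le (hP : IsASGARDSchedule L nM τ β B) :
    ∀ k : ℕ, τ k ^ 2 * B (k + 1) ≤ B 1 / ((k : ℝ) + 1)
  | 0 => by simp [hP.tau_zero]
  | k + 1 => by
    have ih := hP.tau_sq_mul_B_le k
    have hτ := hP.inv_le_tau (k + 1)
    have hτ1 := hP.tau_le_one (k + 1)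
    have hB1 := hP.B_pos 0
    rw [hP.tau_sq_mul_B_succ]
    push_cast at hτ ⊢
    rw [div_le_iff₀ (by positivity)] at hτ
    calc (1 - τ (k + 1)) * (τ k ^ 2 * B (k + 1))
        ≤ (1 - τ (k + 1)) * (B 1 / (k + 1)) := mul_le_mul_of_nonneg_left ih (by linarith)
      _ ≤ B 1 / (k + 1 + 1) := by
        rw [mul_div_assoc', div_le_div_iff₀ (by positivity) (by positivity)]
        nlinarith

theorem beta_succ_le (hP : IsASGARDSchedule L nM τ β B) :
    ∀ k : ℕ, β (k + 1) ≤ β 0 / ((k : ℝ) + 2)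
  | 0 => by norm_num [hP.beta_succ 0, hP.tau_zero]
  | k + 1 => by
    have ih := hP.beta_succ_le k
    have hτ := hP.inv_le_tau (k + 1)
    have hβ := hP.beta_pos (k + 1)
    have := hP.tau_pos (k + 1)
    rw [hP.beta_succ]
    push_cast at hτ ⊢
    rw [div_le_iff₀ (by positivity)] at hτ
    rw [le_div_iff₀ (by positivity)] at ih
    rw [div_le_div_iff₀ (by positivity) (by positivity)]
    nlinarith

theorem beta_succ_le_div (hP : IsASGARDSchedule L nM τ β B) (k : ℕ) :
    β (k + 1) ≤ β 0 / ((k : ℝ) + 1) :=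
  (hP.beta_succ_le k).trans
    (div_le_div_of_nonneg_left hP.beta_zero_pos.le (by positivity) (by linarith))

theorem beta_succ_mul_tau_sq_mul_B_le (hP : IsASGARDSchedule L nM τ β B) (k : ℕ) :
    β (k + 1) * (τ k ^ 2 * B (k + 1)) ≤ (β 0 / ((k : ℝ) + 1)) ^ 2 * (B 1 / β 0) := by
  have hβ0 := hP.beta_zero_pos
  have hB1 := hP.B_pos 0
  calc β (k + 1) * (τ k ^ 2 * B (k + 1)) ≤ β 0 / ((k : ℝ) + 2) * (B 1 / ((k : ℝ) + 1)) :=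
        mul_le_mul (hP.beta_succ_le k) (hP.tau_sq_mul_B_le k)
          (mul_nonneg (sq_nonneg _) (hP.B_pos k).le) (by positivity)
    _ ≤ β 0 * B 1 / (((k : ℝ) + 1) * ((k : ℝ) + 1)) := by
      rw [div_mul_div_comm]
      exact div_le_div_of_nonneg_left (by positivity) (by positivity) (by linarith)
    _ = (β 0 / ((k : ℝ) + 1)) ^ 2 * (B 1 / β 0) := by
      field_simp

end IsASGARDSchedule

theorem add_mul_le_mul_of_accelerated_recursion {τ Φ C D : ℕ → ℝ} (hτ0 : τ 0 = 1)
    (hτ1 : ∀ k, τ k ≤ 1) (hC : ∀ k, C (k + 1) = (1 - τ (k + 1)) * C k)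
    (hstep : ∀ k, Φ (k + 1) ≤ (1 - τ k) * Φ k + C k * (D k - D (k + 1))) :
    ∀ k, Φ (k + 1) + C k * D (k + 1) ≤ C k * D 0
  | 0 => by linarith [show Φ 1 ≤ C 0 * (D 0 - D 1) by simpa [hτ0] using hstep 0]
  | k + 1 => by
    have ih := add_mul_le_mul_of_accelerated_recursion hτ0 hτ1 hC hstep k
    have := mul_le_mul_of_nonneg_left ih (sub_nonneg.2 (hτ1 (k + 1)))
    have hs := hstep (k + 1)
    rw [hC k] at hs ⊢
    linarith

theorem le_add_sqrt_of_sq_le {r b c : ℝ} (h : r ^ 2 ≤ 2 * b * r + c) : r ≤ b + √(b ^ 2 + c) := by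
  have := Real.le_sqrt_of_sq_le (show (r - b) ^ 2 ≤ b ^ 2 + c by linarith)
  linarith

section Infeasibility

variable {G : Type*} [NormedAddCommGroup G] [InnerProductSpace ℝ G]

theorem eq_zero_of_forall_inner_le {u y₀ : G} (h : ∀ y, ⟪u, y⟫ ≤ ⟪u, y₀⟫) : u = 0 :=
  real_inner_self_nonpos.1 (by simpa [inner_add_right] using h (y₀ + u))

theorem sqrt_inner_le_of_smoothedGap_le {S T : G →L[ℝ] G} (hT : T.IsPositive)
    (hTS : Function.LeftInverse T S) {u w ydot : G} {β ρ E K : ℝ} (hβ : 0 < β) (hβρ : β ≤ ρ)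
    (hE : 2 * β * E ≤ ρ ^ 2 * K) (h : ⟪u, ydot⟫ + 1 / (2 * β) * ⟪u, T u⟫ - ⟪u, w⟫ ≤ E) :
    √⟪u, T u⟫ ≤ ρ * (√⟪w - ydot, S (w - ydot)⟫ + √(⟪w - ydot, S (w - ydot)⟫ + K)) := by
  set q := ⟪w - ydot, S (w - ydot)⟫
  have hq : 0 ≤ q := by simpa [q, hTS _, real_inner_comm] using hT.inner_nonneg_left (S (w - ydot))
  have hCS := hT.inner_le_sqrt_mul_sqrt hTS u (w - ydot)
  have hr : √⟪u, T u⟫ ^ 2 = ⟪u, T u⟫ := Real.sq_sqrt (hT.inner_nonneg_right u)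
  have hquad : √⟪u, T u⟫ ^ 2 ≤ 2 * (β * √q) * √⟪u, T u⟫ + 2 * β * E := by
    rw [inner_sub_right] at hCS
    rw [hr]
    field_simp at h
    nlinarith
  have hroot := le_add_sqrt_of_sq_le hquad
  have hρ : 0 ≤ ρ := hβ.le.trans hβρ
  have hsqrt : √((β * √q) ^ 2 + 2 * β * E) ≤ ρ * √(q + K) := by
    rw [← Real.sqrt_sq hρ, ← Real.sqrt_mul (sq_nonneg _)]
    refine Real.sqrt_le_sqrt ?_
    rw [mul_pow, Real.sq_sqrt hq]
    nlinarith [mul_le_mul hβρ hβρ hβ.le hρ]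
  nlinarith [mul_le_mul_of_nonneg_right hβρ (Real.sqrt_nonneg q)]

end Infeasibility

section Convergence

variable {H G : Type*} [NormedAddCommGroup H] [InnerProductSpace ℝ H] [CompleteSpace H]
  [NormedAddCommGroup G] [InnerProductSpace ℝ G] [CompleteSpace G]

theorem asgard_smoothedGap_le {f : H → ℝ} {f' : H → H} {L : ℝ} (hcvx : ConvexOn ℝ Set.univ f)
    (hf : ∀ x, HasGradientAt f (f' x) x) (hlip : ∀ x y, ‖f' x - f' y‖ ≤ L * ‖x - y‖)
    {s : Set H} {g : H → ℝ} (hg : ConvexOn ℝ s g)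
    {M : H →L[ℝ] G} {T : G →L[ℝ] G} (hT : T.IsPositive)
    {nM : ℝ} (hM : ∀ x, ⟪M x, T (M x)⟫ ≤ nM ^ 2 * ‖x‖ ^ 2) {c : G} (ydot : G)
    {z : H} (hzs : z ∈ s) (hz : M z = c)
    {τ β B : ℕ → ℝ} (hP : IsASGARDSchedule L nM τ β B) {xb xt xh v : ℕ → H}
    (hxh : ∀ k, xh k = (1 - τ k) • xb k + τ k • xt k)
    (hv : ∀ k, v k = ContinuousLinearMap.adjoint M (ydot + (β (k + 1))⁻¹ • T (M (xh k) - c)))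
    (hxt_mem : ∀ k, xt (k + 1) ∈ s)
    (hxt : ∀ k, IsMinOn (fun w => g w + τ k * B (k + 1) / 2 *
      ‖w - xt k + (τ k * B (k + 1))⁻¹ • (f' (xh k) + v k)‖ ^ 2) s (xt (k + 1)))
    (hxb : ∀ k, xb (k + 1) = (1 - τ k) • xb k + τ k • xt (k + 1)) (k : ℕ) :
    f (xb (k + 1)) + g (xb (k + 1)) + smoothedIndicator T c ydot (β (k + 1)) (M (xb (k + 1)))
      - (f z + g z) ≤ τ k ^ 2 * B (k + 1) / 2 * ‖xt 0 - z‖ ^ 2 := by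
  have hxb_mem := hg.1.convexComb_iterate_mem hP.tau_zero (fun k => (hP.tau_pos k).le)
    hP.tau_le_one hxt_mem hxb
  have hxb_mem_or : ∀ k, xb k ∈ s ∨ τ k = 1
    | 0 => Or.inr hP.tau_zero
    | k + 1 => Or.inl (hxb_mem k)
  have hβ : ∀ k, (1 + τ k) * β (k + 1) = β k := fun k => by
    rw [hP.beta_succ]
    field_simp [(by linarith [hP.tau_pos k] : 1 + τ k ≠ 0)]
  have hstep := fun k => asgard_smoothedGap_step hcvx hf hlip hg hT hM ydot hzs hz (hP.tau_pos k)
    (hP.tau_le_one k) (hP.beta_pos (k + 1)) (hP.B_succ k).ge (hP.B_pos k) (hxb_mem_or k)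
    (hxt_mem k) (hxh k) (hv k) (hxt k) (hxb k)
  simp only [hβ] at hstep
  have htele := add_mul_le_mul_of_accelerated_recursion
    (Φ := fun k => f (xb k) + g (xb k) + smoothedIndicator T c ydot (β k) (M (xb k)) - (f z + g z))
    (C := fun k => τ k ^ 2 * B (k + 1) / 2)
    (D := fun k => ‖xt k - z‖ ^ 2) hP.tau_zero hP.tau_le_one
    (fun k => by linear_combination (hP.tau_sq_mul_B_succ k) / 2) hstep k
  have hnonneg : 0 ≤ τ k ^ 2 * B (k + 1) / 2 * ‖xt (k + 1) - z‖ ^ 2 := by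
    have := hP.B_pos k
    positivity
  linarith

end Convergence

theorem stmt17_general
    {H G : Type*} [NormedAddCommGroup H] [InnerProductSpace ℝ H] [CompleteSpace H]
    [NormedAddCommGroup G] [InnerProductSpace ℝ G] [CompleteSpace G]
    (M : H →L[ℝ] G) (c : G)
    -- the smooth term f, with gradient f' which is Lf-Lipschitz
    (f : H → ℝ) (f' : H → H) (Lf : ℝ) (hLf : 0 ≤ Lf)
    (hf_cvx : ConvexOn ℝ Set.univ f)
    (hf_grad : ∀ x, HasGradientAt f (f' x) x)
    (hf_lip : ∀ x y : H, ‖f' x - f' y‖ ≤ Lf * ‖x - y‖)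
    -- the proper lsc convex function g, represented by its domain and real values on it
    (domg : Set H) (g : H → ℝ)
    (hg_cvx : ConvexOn ℝ domg g)
    (gE : H → EReal)
    (hgE : ∀ x, gE x = if x ∈ domg then ((g x : EReal)) else (⊤ : EReal))
    -- the positive definite operator S, its inverse, and the norm ‖M‖_{S⁻¹}
    (S Sinv : G →L[ℝ] G)
    (hS_sym : ∀ x y : G, ⟪S x, y⟫ = ⟪x, S y⟫)
    (σ : ℝ) (hσ : 0 < σ) (hSpos : ∀ y : G, σ * ‖y‖ ^ 2 ≤ ⟪y, S y⟫)
    (hSinv₁ : ∀ y, S (Sinv y) = y) (hSinv₂ : ∀ y, Sinv (S y) = y)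
    (nM : ℝ) (hnM : 0 ≤ nM)
    (hM : ∀ x : H, Real.sqrt ⟪M x, Sinv (M x)⟫ ≤ nM * ‖x‖)
    (ydot : G)
    -- (x*, y*) is a saddle point of the Lagrangian L(x,y) = f(x) + g(x) + ⟨Mx − c, y⟩
    (xopt : H) (yopt : G) (hxopt_mem : xopt ∈ domg)
    (hsaddle₁ : ∀ y : G, f xopt + g xopt + ⟪M xopt - c, y⟫ ≤
        f xopt + g xopt + ⟪M xopt - c, yopt⟫)
    (hsaddle₂ : ∀ x : H,
      ((f xopt + g xopt + ⟪M xopt - c, yopt⟫ : ℝ) : EReal) ≤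
        ((f x + ⟪M x - c, yopt⟫ : ℝ) : EReal) + gE x)
    -- the iterates of Algorithm 1 with h = ι_{{c}}, for which
    -- y*_β(y; ẏ) = ẏ + β⁻¹ S⁻¹(y − c)
    (τk βk Bk : ℕ → ℝ) (xb xt xh v : ℕ → H)
    (hβ0 : 0 < βk 0) (hτ0 : τk 0 = 1) (hτpos : ∀ k, 0 < τk k)
    (hxh : ∀ k, xh k = (1 - τk k) • xb k + τk k • xt k)
    (hβrec : ∀ k, βk (k + 1) = βk k / (1 + τk k))
    (hBrec : ∀ k, Bk (k + 1) = Lf + nM ^ 2 / βk (k + 1))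
    (hv : ∀ k, v k = (ContinuousLinearMap.adjoint M)
        (ydot + (βk (k + 1))⁻¹ • Sinv (M (xh k) - c)))
    (hxt_mem : ∀ k, xt (k + 1) ∈ domg)
    (hxt : ∀ k, ∀ z ∈ domg,
      g (xt (k + 1)) + τk k * Bk (k + 1) / 2 *
          ‖xt (k + 1) - xt k + (τk k * Bk (k + 1))⁻¹ • (f' (xh k) + v k)‖ ^ 2 ≤
        g z + τk k * Bk (k + 1) / 2 *
          ‖z - xt k + (τk k * Bk (k + 1))⁻¹ • (f' (xh k) + v k)‖ ^ 2)
    (hxb : ∀ k, xb (k + 1) = (1 - τk k) • xb k + τk k • xt (k + 1))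
    (hcubic : ∀ k, (Bk (k + 1) - Lf) / Bk (k + 1) * τk (k + 1) ^ 3 + τk (k + 1) ^ 2
        + τk k ^ 2 * τk (k + 1) - τk k ^ 2 = 0)
    :
    ∀ k : ℕ,
      Real.sqrt ⟪M (xb (k + 1)) - c, Sinv (M (xb (k + 1)) - c)⟫ ≤
        βk 0 / ((k : ℝ) + 1) * (Real.sqrt ⟪yopt - ydot, S (yopt - ydot)⟫
          + Real.sqrt (⟪yopt - ydot, S (yopt - ydot)⟫
              + Bk 1 / βk 0 * ‖xt 0 - xopt‖ ^ 2)) := by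
  have hS : S.IsPositive := (S.isPositive_iff).2 ⟨hS_sym, fun y => by
    rw [real_inner_comm]; nlinarith [hSpos y, mul_nonneg hσ.le (sq_nonneg ‖y‖)]⟩
  have hT : Sinv.IsPositive := hS.of_leftInverse hSinv₁
  have hM_sq : ∀ x, ⟪M x, Sinv (M x)⟫ ≤ nM ^ 2 * ‖x‖ ^ 2 := fun x => by
    rw [← mul_pow]
    exact (Real.sqrt_le_left (by positivity)).1 (hM x)
  have hfeas : M xopt = c :=
    sub_eq_zero.1 (eq_zero_of_forall_inner_le fun y => by linarith [hsaddle₁ y])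
  intro k
  rcases hnM.eq_or_lt with rfl | hnM_pos
  · have h0 := hM_sq (xb (k + 1) - xopt)
    rw [map_sub, hfeas] at h0
    rw [Real.sqrt_eq_zero'.2 (by simpa using h0)]
    exact mul_nonneg (div_nonneg hβ0.le (by positivity)) (by positivity)
  have hP : IsASGARDSchedule Lf nM τk βk Bk :=
    ⟨hLf, hnM_pos, hβ0, hτ0, hτpos, hβrec, hBrec, hcubic⟩
  have hgap := asgard_smoothedGap_le hf_cvx hf_grad hf_lip hg_cvx hT hM_sq ydot hxopt_mem hfeas hP
    hxh hv hxt_mem (fun k => isMinOn_iff.2 (hxt k)) hxb k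
  have hmem := hg_cvx.1.convexComb_iterate_mem hτ0 (fun k => (hτpos k).le) hP.tau_le_one
    hxt_mem hxb k
  have hlow := hsaddle₂ (xb (k + 1))
  rw [hgE, if_pos hmem, hfeas, sub_self, inner_zero_left, add_zero, ← EReal.coe_add,
    EReal.coe_le_coe_iff] at hlow
  refine sqrt_inner_le_of_smoothedGap_le (E := τk k ^ 2 * Bk (k + 1) / 2 * ‖xt 0 - xopt‖ ^ 2)
    hT hSinv₂ (hP.beta_pos (k + 1)) (hP.beta_succ_le_div k) ?_
    (by unfold smoothedIndicator at hgap; linarith)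
  have := mul_le_mul_of_nonneg_right (hP.beta_succ_mul_tau_sq_mul_B_le k) (sq_nonneg ‖xt 0 - xopt‖)
  linarith

/-- infeasibility bound for linearized ASGARD on the
equality-constrained problem (`h = ι_{{c}}`): for every `k`,
`‖Mx̄^{k+1} − c‖_{S⁻¹} ≤ (β_0/(k+1)) [ ‖y* − ẏ‖_S
+ (‖y* − ẏ‖²_S + (B_1/β_0)‖x̃⁰ − x*‖²)^{1/2} ]`. -/
theorem stmt17
    {H G : Type*} [NormedAddCommGroup H] [InnerProductSpace ℝ H] [CompleteSpace H]
    [NormedAddCommGroup G] [InnerProductSpace ℝ G] [CompleteSpace G]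
    (M : H →L[ℝ] G) (c : G)
    -- the smooth term f, with gradient f' which is Lf-Lipschitz
    (f : H → ℝ) (f' : H → H) (Lf : ℝ) (hLf : 0 ≤ Lf)
    (hf_cvx : ConvexOn ℝ Set.univ f)
    (hf_grad : ∀ x, HasGradientAt f (f' x) x)
    (hf_lip : ∀ x y : H, ‖f' x - f' y‖ ≤ Lf * ‖x - y‖)
    -- the proper lsc convex function g, represented by its domain and real values on it
    (domg : Set H) (g : H → ℝ)
    (hdomg_ne : domg.Nonempty) (hdomg_cvx : Convex ℝ domg)
    (hg_cvx : ConvexOn ℝ domg g)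
    (hg_lsc : LowerSemicontinuous fun x => if x ∈ domg then ((g x : EReal)) else (⊤ : EReal))
    (gE : H → EReal)
    (hgE : ∀ x, gE x = if x ∈ domg then ((g x : EReal)) else (⊤ : EReal))
    -- the positive definite operator S, its inverse, and the norm ‖M‖_{S⁻¹}
    (S Sinv : G →L[ℝ] G)
    (hS_sym : ∀ x y : G, ⟪S x, y⟫ = ⟪x, S y⟫)
    (σ : ℝ) (hσ : 0 < σ) (hSpos : ∀ y : G, σ * ‖y‖ ^ 2 ≤ ⟪y, S y⟫)
    (hSinv₁ : ∀ y, S (Sinv y) = y) (hSinv₂ : ∀ y, Sinv (S y) = y)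
    (nM : ℝ) (hnM : 0 ≤ nM)
    (hM : ∀ x : H, Real.sqrt ⟪M x, Sinv (M x)⟫ ≤ nM * ‖x‖)
    (ydot : G)
    -- (x*, y*) is a saddle point of the Lagrangian L(x,y) = f(x) + g(x) + ⟨Mx − c, y⟩
    (xopt : H) (yopt : G) (hxopt_mem : xopt ∈ domg)
    (hsaddle₁ : ∀ y : G, f xopt + g xopt + ⟪M xopt - c, y⟫ ≤
        f xopt + g xopt + ⟪M xopt - c, yopt⟫)
    (hsaddle₂ : ∀ x : H,
      ((f xopt + g xopt + ⟪M xopt - c, yopt⟫ : ℝ) : EReal) ≤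
        ((f x + ⟪M x - c, yopt⟫ : ℝ) : EReal) + gE x)
    (Fstar : ℝ) (hFstar : Fstar = f xopt + g xopt)
    -- the iterates of Algorithm 1 with h = ι_{{c}}, for which
    -- y*_β(y; ẏ) = ẏ + β⁻¹ S⁻¹(y − c)
    (τk βk Bk : ℕ → ℝ) (xb xt xh v : ℕ → H)
    (hβ0 : 0 < βk 0) (hτ0 : τk 0 = 1) (hτpos : ∀ k, 0 < τk k)
    (hxh : ∀ k, xh k = (1 - τk k) • xb k + τk k • xt k)
    (hβrec : ∀ k, βk (k + 1) = βk k / (1 + τk k))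
    (hBrec : ∀ k, Bk (k + 1) = Lf + nM ^ 2 / βk (k + 1))
    (hv : ∀ k, v k = (ContinuousLinearMap.adjoint M)
        (ydot + (βk (k + 1))⁻¹ • Sinv (M (xh k) - c)))
    (hxt_mem : ∀ k, xt (k + 1) ∈ domg)
    (hxt : ∀ k, ∀ z ∈ domg,
      g (xt (k + 1)) + τk k * Bk (k + 1) / 2 *
          ‖xt (k + 1) - xt k + (τk k * Bk (k + 1))⁻¹ • (f' (xh k) + v k)‖ ^ 2 ≤
        g z + τk k * Bk (k + 1) / 2 *
          ‖z - xt k + (τk k * Bk (k + 1))⁻¹ • (f' (xh k) + v k)‖ ^ 2)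
    (hxb : ∀ k, xb (k + 1) = (1 - τk k) • xb k + τk k • xt (k + 1))
    (hcubic : ∀ k, (Bk (k + 1) - Lf) / Bk (k + 1) * τk (k + 1) ^ 3 + τk (k + 1) ^ 2
        + τk k ^ 2 * τk (k + 1) - τk k ^ 2 = 0)
    :
    ∀ k : ℕ,
      Real.sqrt ⟪M (xb (k + 1)) - c, Sinv (M (xb (k + 1)) - c)⟫ ≤
        βk 0 / ((k : ℝ) + 1) * (Real.sqrt ⟪yopt - ydot, S (yopt - ydot)⟫
          + Real.sqrt (⟪yopt - ydot, S (yopt - ydot)⟫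
              + Bk 1 / βk 0 * ‖xt 0 - xopt‖ ^ 2)) :=
  stmt17_general M c f f' Lf hLf hf_cvx hf_grad hf_lip domg g hg_cvx gE hgE S Sinv hS_sym σ hσ hSpos
    hSinv₁ hSinv₂ nM hnM hM ydot xopt yopt hxopt_mem hsaddle₁ hsaddle₂ τk βk Bk xb xt xh v hβ0 hτ0
    hτpos hxh hβrec hBrec hv hxt_mem hxt hxb hcubic
end
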